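/- arXiv:2504.21413 — 6 statements merged into one kernel-verified Lean document; each statement's English description precedes it below -/
import Mathlib

section
/- Let λ ∈ (0,1)^d be distinct and α ∈ ℝ^d with all α_i > 0. Define r(x) = Π_{i=1}^d(1 − λ_i x) + x·Σ_{i=1}^d α_i Π_{j≠i}(1 − λ_j x). Then r has degree d − 1 if Σ_{i=1}^d α_i/λ_i = 1 and degree exactly d otherwise; moreover all roots of r are real and pairwise distinct. -/
open Finset Polynomial Filter

lemma prod_neg_sign {ι : Type*} {s : Finset ι} {f : ι → ℝ} (h : ∀ x ∈ s, f x < 0) :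
    0 < (-1 : ℝ) ^ s.card * ∏ x ∈ s, f x := by
  have h1 : ∏ x ∈ s, f x = (-1 : ℝ) ^ s.card * ∏ x ∈ s, (-(f x)) := by
    rw [← Finset.prod_const, ← Finset.prod_mul_distrib]
    exact Finset.prod_congr rfl fun x _ => by ring
  have h2 : 0 < ∏ x ∈ s, (-(f x)) := Finset.prod_pos fun x hx => neg_pos.2 (h x hx)
  rw [h1, ← mul_assoc, ← mul_pow]
  simpa using h2

lemma distinct_roots_aux (r : Polynomial ℝ) (h0 : r ≠ 0) (n : ℕ) (f : ℕ → ℝ)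
    (hroot : ∀ k < n, r.IsRoot (f k)) (hanti : ∀ k, k + 1 < n → f (k + 1) < f k)
    (hdeg : r.natDegree ≤ n) :
    r.natDegree = n ∧ (r.roots).card = r.natDegree ∧ (r.roots).Nodup := by
  have hmono : ∀ i j, i < j → j < n → f j < f i := by
    intro i j hij hjn
    induction j with
    | zero => omega
    | succ m ih =>
      rcases Nat.lt_succ_iff_lt_or_eq.1 hij with h | h
      · exact lt_trans (hanti m hjn) (ih h (by omega))
      · subst h; exact hanti i hjn
  have hinj : Set.InjOn f (Finset.range n) := by
    intro i hi j hj hij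
    simp only [Finset.coe_range, Set.mem_Iio] at hi hj
    by_contra hne
    rcases lt_or_gt_of_ne hne with h | h
    · exact absurd hij (ne_of_gt (hmono i j h hj))
    · exact absurd hij.symm (ne_of_gt (hmono j i h hi))
  have hsub : (Finset.range n).image f ⊆ r.roots.toFinset := by
    intro x hx
    rcases Finset.mem_image.1 hx with ⟨k, hk, rfl⟩
    rw [Multiset.mem_toFinset, mem_roots h0]
    exact hroot k (Finset.mem_range.1 hk)
  have h1 : n ≤ r.roots.toFinset.card := by
    calc n = ((Finset.range n).image f).card := (Finset.card_image_of_injOn hinj).symm ▸ (Finset.card_range n).symm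
    _ ≤ r.roots.toFinset.card := Finset.card_le_card hsub
  have h2 : r.roots.toFinset.card ≤ r.roots.card := Multiset.toFinset_card_le _
  have h3 : r.roots.card ≤ r.natDegree := r.card_roots'
  have hdn : r.natDegree = n := le_antisymm hdeg (by omega)
  refine ⟨hdn, by omega, Multiset.toFinset_card_eq_card_iff_nodup.mp (by omega)⟩

lemma fac_eq (a : ℝ) : (1 : Polynomial ℝ) - C a * X = C (-a) * X + C 1 := by
  simp [map_neg]; ring

lemma fac_natDegree {a : ℝ} (ha : a ≠ 0) : ((1 : Polynomial ℝ) - C a * X).natDegree = 1 := by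
  rw [fac_eq]; exact natDegree_linear (neg_ne_zero.2 ha)

lemma fac_leadingCoeff {a : ℝ} (ha : a ≠ 0) : ((1 : Polynomial ℝ) - C a * X).leadingCoeff = -a := by
  rw [fac_eq]; exact leadingCoeff_linear (neg_ne_zero.2 ha)

lemma fac_ne_zero (a : ℝ) : (1 : Polynomial ℝ) - C a * X ≠ 0 := by
  intro h
  have := congrArg (fun p => Polynomial.coeff p 0) h
  simp at this

lemma prod_fac_natDegree {ι : Type*} (s : Finset ι) (lam : ι → ℝ) (h : ∀ i ∈ s, lam i ≠ 0) :
    (∏ i ∈ s, ((1 : Polynomial ℝ) - C (lam i) * X)).natDegree = s.card := by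
  rw [natDegree_prod _ _ (fun i _ => fac_ne_zero (lam i))]
  rw [Finset.sum_congr rfl (fun i hi => fac_natDegree (h i hi))]
  simp

lemma prod_fac_leadingCoeff {ι : Type*} (s : Finset ι) (lam : ι → ℝ) (h : ∀ i ∈ s, lam i ≠ 0) :
    (∏ i ∈ s, ((1 : Polynomial ℝ) - C (lam i) * X)).leadingCoeff = ∏ i ∈ s, (-(lam i)) := by
  rw [leadingCoeff_prod]
  exact Finset.prod_congr rfl fun i hi => fac_leadingCoeff (h i hi)

lemma prod_fac_coeff_card {ι : Type*} (s : Finset ι) (lam : ι → ℝ) (h : ∀ i ∈ s, lam i ≠ 0) :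
    (∏ i ∈ s, ((1 : Polynomial ℝ) - C (lam i) * X)).coeff s.card = ∏ i ∈ s, (-(lam i)) := by
  have h1 := prod_fac_natDegree s lam h
  have h2 := prod_fac_leadingCoeff s lam h
  rwa [leadingCoeff, h1] at h2

section main
variable {d : ℕ} (α lam : Fin d → ℝ)

noncomputable def rr : Polynomial ℝ := ∏ i, (1 - C (lam i) * X) +
      X * ∑ i, C (α i) * ∏ j ∈ Finset.univ.erase i, (1 - C (lam j) * X)

lemma fac_natDegree_le (a : ℝ) : ((1 : Polynomial ℝ) - C a * X).natDegree ≤ 1 := by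
  refine (natDegree_sub_le _ _).trans ?_
  simp only [natDegree_one]
  refine max_le (by norm_num) ((natDegree_mul_le).trans ?_)
  simp

lemma rr_natDegree_le (hd : 0 < d) : (rr α lam).natDegree ≤ d := by
  refine (natDegree_add_le _ _).trans (max_le ?_ ?_)
  · exact (natDegree_prod_le _ _).trans ((Finset.sum_le_card_nsmul _ _ 1
      (fun i _ => fac_natDegree_le (lam i))).trans (by simp))
  · refine (natDegree_mul_le).trans ?_
    have h1 : (∑ i, C (α i) * ∏ j ∈ Finset.univ.erase i, (1 - C (lam j) * X)).natDegree ≤ d - 1 := by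
      refine natDegree_sum_le_of_forall_le _ _ fun i _ => ?_
      refine (natDegree_mul_le).trans ?_
      simp only [natDegree_C, zero_add]
      refine (natDegree_prod_le _ _).trans ((Finset.sum_le_card_nsmul _ _ 1
        (fun j _ => fac_natDegree_le (lam j))).trans ?_)
      simp [Finset.card_erase_of_mem]
    simp only [natDegree_X]
    omega

lemma rr_eval_zero : (rr α lam).eval 0 = 1 := by
  simp [rr, eval_prod]

lemma rr_ne_zero : rr α lam ≠ 0 := fun h => by simpa [h] using rr_eval_zero α lam

lemma rr_coeff_d (hd : 0 < d) (hl : ∀ i, lam i ≠ 0) :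
    (rr α lam).coeff d = (-1 : ℝ) ^ d * (∏ i, lam i) * (1 - ∑ i, α i / lam i) := by
  have hcard : (univ : Finset (Fin d)).card = d := by simp
  have hP : (∏ i, ((1 : Polynomial ℝ) - C (lam i) * X)).coeff d = ∏ i, (-(lam i)) := by
    have := prod_fac_coeff_card univ lam (fun i _ => hl i)
    rwa [hcard] at this
  have hQ : ∀ i : Fin d, (∏ j ∈ Finset.univ.erase i, ((1 : Polynomial ℝ) - C (lam j) * X)).coeff (d - 1)
      = ∏ j ∈ Finset.univ.erase i, (-(lam j)) := by
    intro i
    have := prod_fac_coeff_card (univ.erase i) lam (fun j _ => hl j)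
    rwa [Finset.card_erase_of_mem (mem_univ i), hcard] at this
  have hX : (X * ∑ i, C (α i) * ∏ j ∈ Finset.univ.erase i, ((1:Polynomial ℝ) - C (lam j) * X)).coeff d
      = ∑ i, α i * ∏ j ∈ Finset.univ.erase i, (-(lam j)) := by
    obtain ⟨e, rfl⟩ : ∃ e, d = e + 1 := ⟨d - 1, by omega⟩
    simp only [Nat.add_sub_cancel] at hQ
    rw [coeff_X_mul, finset_sum_coeff]
    refine Finset.sum_congr rfl fun i _ => ?_
    rw [coeff_C_mul, hQ i]
  rw [rr, coeff_add, hP, hX]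
  -- now pure algebra
  have hprodneg : ∀ (s : Finset (Fin d)), ∏ j ∈ s, (-(lam j)) = (-1:ℝ)^s.card * ∏ j ∈ s, lam j := by
    intro s
    rw [← Finset.prod_const, ← Finset.prod_mul_distrib]
    exact Finset.prod_congr rfl fun x _ => by ring
  have herase : ∀ i : Fin d, (∏ j ∈ univ.erase i, lam j) = (∏ j, lam j) * (lam i)⁻¹ := by
    intro i
    have h := Finset.prod_erase_mul univ lam (mem_univ i)
    rw [← h, mul_inv_cancel_right₀ (hl i)]
  have hsum : ∑ i, α i * ∏ j ∈ Finset.univ.erase i, (-(lam j))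
      = (-1:ℝ)^(d-1) * (∏ j, lam j) * ∑ i, α i / lam i := by
    rw [Finset.mul_sum]
    refine Finset.sum_congr rfl fun i _ => ?_
    rw [hprodneg, Finset.card_erase_of_mem (mem_univ i), hcard, herase]
    field_simp
  rw [hsum, hprodneg, hcard]
  have hpow : (-1:ℝ)^d = -(-1:ℝ)^(d-1) := by
    obtain ⟨e, rfl⟩ : ∃ e, d = e + 1 := ⟨d - 1, by omega⟩
    simp [pow_succ]
  rw [hpow]; ring


lemma rr_eval_inv (hl : ∀ i, lam i ≠ 0) (k : Fin d) :
    eval (lam k)⁻¹ (rr α lam) =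
      (lam k)⁻¹ * (α k * ∏ j ∈ univ.erase k, (1 - lam j * (lam k)⁻¹)) := by
  have h1 : eval ((lam k)⁻¹) (∏ i, ((1:Polynomial ℝ) - C (lam i) * X)) = 0 := by
    rw [eval_prod]
    refine Finset.prod_eq_zero (mem_univ k) ?_
    simp [mul_inv_cancel₀ (hl k)]
  have h2 : eval ((lam k)⁻¹) (∑ i, C (α i) * ∏ j ∈ Finset.univ.erase i, ((1:Polynomial ℝ) - C (lam j) * X))
      = α k * ∏ j ∈ univ.erase k, (1 - lam j * (lam k)⁻¹) := by
    rw [eval_finset_sum]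
    rw [Finset.sum_eq_single k]
    · simp [eval_prod]
    · intro i _ hik
      rw [eval_mul, eval_prod]
      refine mul_eq_zero_of_right _ (Finset.prod_eq_zero (Finset.mem_erase.2 ⟨hik.symm, mem_univ k⟩) ?_)
      simp [mul_inv_cancel₀ (hl k)]
    · intro h; exact absurd (mem_univ k) h
  rw [rr, eval_add, h1, eval_mul, eval_X, h2, zero_add]

lemma rr_sign (hmono : StrictMono lam) (hl : ∀ i, 0 < lam i) (ha : ∀ i, 0 < α i) (k : Fin d) :
    0 < (-1:ℝ) ^ (d - 1 - k.val) * eval (lam k)⁻¹ (rr α lam) := by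
  have hx : 0 < (lam k)⁻¹ := inv_pos.2 (hl k)
  rw [rr_eval_inv α lam (fun i => (hl i).ne') k]
  have hfac : ∀ j : Fin d, (1 : ℝ) - lam j * (lam k)⁻¹ = (lam k - lam j) * (lam k)⁻¹ := by
    intro j; rw [sub_mul, mul_inv_cancel₀ (hl k).ne']
  have hprod : ∏ j ∈ univ.erase k, ((1:ℝ) - lam j * (lam k)⁻¹)
      = (∏ j ∈ univ.erase k, (lam k - lam j)) * ((lam k)⁻¹) ^ (d - 1) := by
    rw [Finset.prod_congr rfl (fun j _ => hfac j), Finset.prod_mul_distrib, Finset.prod_const,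
      Finset.card_erase_of_mem (mem_univ k), Finset.card_univ, Fintype.card_fin]
  rw [hprod]
  have hsplit : ∏ j ∈ univ.erase k, (lam k - lam j)
      = (∏ j ∈ (univ.erase k).filter (fun j => j < k), (lam k - lam j)) *
        ∏ j ∈ (univ.erase k).filter (fun j => ¬ j < k), (lam k - lam j) :=
    (Finset.prod_filter_mul_prod_filter_not _ _ _).symm
  have hIoi : (univ.erase k).filter (fun j => ¬ j < k) = Finset.Ioi k := by
    ext j
    simp only [Finset.mem_filter, Finset.mem_erase, mem_univ, true_and, and_true, not_lt,
      Finset.mem_Ioi]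
    constructor
    · rintro ⟨hne, hle⟩; exact lt_of_le_of_ne hle (Ne.symm hne)
    · intro h; exact ⟨h.ne', h.le⟩
  have hP1 : 0 < ∏ j ∈ (univ.erase k).filter (fun j => j < k), (lam k - lam j) := by
    refine Finset.prod_pos fun j hj => ?_
    have := (Finset.mem_filter.1 hj).2
    exact sub_pos.2 (hmono this)
  have hN : 0 < (-1:ℝ) ^ (d - 1 - k.val) * ∏ j ∈ Finset.Ioi k, (lam k - lam j) := by
    have := prod_neg_sign (s := Finset.Ioi k) (f := fun j => lam k - lam j)
      (fun j hj => sub_neg.2 (hmono (Finset.mem_Ioi.1 hj)))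
    rwa [Fin.card_Ioi] at this
  rw [hsplit, hIoi]
  have hxp : 0 < ((lam k)⁻¹) ^ (d - 1) := pow_pos hx _
  set m := d - 1 - k.val
  set P1 := ∏ j ∈ (univ.erase k).filter (fun j => j < k), (lam k - lam j)
  set N := ∏ j ∈ Finset.Ioi k, (lam k - lam j)
  have hre : (-1:ℝ)^m * ((lam k)⁻¹ * (α k * (P1 * N * ((lam k)⁻¹)^(d-1))))
      = ((lam k)⁻¹ * α k * P1 * ((lam k)⁻¹)^(d-1)) * ((-1:ℝ)^m * N) := by ring
  rw [hre]
  exact mul_pos (mul_pos (mul_pos (mul_pos hx (ha k)) hP1) hxp) hN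

end main
theorem sorted_main (d : ℕ) (hd : 0 < d) (α lam : Fin d → ℝ)
    (hlam : ∀ i, lam i ∈ Set.Ioo (0 : ℝ) 1)
    (hmono : StrictMono lam) (halpha : ∀ i, 0 < α i) :
    ((∑ i, α i / lam i = 1 → (rr α lam).natDegree = d - 1) ∧
     (∑ i, α i / lam i ≠ 1 → (rr α lam).natDegree = d)) ∧
    ((rr α lam).roots).card = (rr α lam).natDegree ∧ ((rr α lam).roots).Nodup := by
  have hl : ∀ i, 0 < lam i := fun i => (hlam i).1
  set r := rr α lam with hrdef
  set S := ∑ i, α i / lam i with hSdef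
  have hne : r ≠ 0 := rr_ne_zero α lam
  have hdle : r.natDegree ≤ d := rr_natDegree_le α lam hd
  have hcoeff : r.coeff d = (-1 : ℝ) ^ d * (∏ i, lam i) * (1 - S) :=
    rr_coeff_d α lam hd (fun i => (hl i).ne')
  -- total endpoint function
  set pp : ℕ → ℝ := fun k => if h : k < d then (lam ⟨k, h⟩)⁻¹ else 0 with hppdef
  have hppk : ∀ (k : ℕ) (h : k < d), pp k = (lam ⟨k, h⟩)⁻¹ := fun k h => dif_pos h
  have hpppos : ∀ k, k < d → 0 < pp k := by
    intro k h; rw [hppk k h]; exact inv_pos.2 (hl _)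
  have hsign : ∀ (k : ℕ) (h : k < d), 0 < (-1:ℝ) ^ (d - 1 - k) * eval (pp k) r := by
    intro k h
    rw [hppk k h]
    exact rr_sign α lam hmono hl halpha ⟨k, h⟩
  -- interleaving roots
  have hkey : ∀ k : ℕ, ∃ x, ∀ _ : k + 1 < d, x ∈ Set.Ioo (pp (k+1)) (pp k) ∧ r.IsRoot x := by
    intro k
    by_cases hk : k + 1 < d
    · have hk0 : k < d := by omega
      have hab : pp (k+1) < pp k := by
        rw [hppk _ hk, hppk _ hk0]
        exact inv_strictAnti₀ (hl _) (hmono (by simp [Fin.lt_def]))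
      have s1 := hsign (k+1) hk
      have s0 := hsign k hk0
      have hm : d - 1 - k = (d - 1 - (k+1)) + 1 := by omega
      rw [hm, pow_succ] at s0
      set m := d - 1 - (k+1)
      rcases Nat.even_or_odd m with hev | hod
      · rw [hev.neg_one_pow] at s0 s1
        have h1 : eval (pp k) r < 0 := by nlinarith
        have h2 : 0 < eval (pp (k+1)) r := by linarith
        obtain ⟨x, hx, hx0⟩ := intermediate_value_Ioo' hab.le r.continuousOn
          (Set.mem_Ioo.2 ⟨h1, h2⟩)
        exact ⟨x, fun _ => ⟨hx, hx0⟩⟩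
      · rw [hod.neg_one_pow] at s0 s1
        have h1 : 0 < eval (pp k) r := by nlinarith
        have h2 : eval (pp (k+1)) r < 0 := by linarith
        obtain ⟨x, hx, hx0⟩ := intermediate_value_Ioo hab.le r.continuousOn
          (Set.mem_Ioo.2 ⟨h2, h1⟩)
        exact ⟨x, fun _ => ⟨hx, hx0⟩⟩
    · exact ⟨0, fun h => absurd h hk⟩
  choose c hc using hkey
  by_cases hS : S = 1
  · -- degree d - 1 case
    have hc0 : r.coeff d = 0 := by rw [hcoeff, hS]; ring
    have hdle' : r.natDegree ≤ d - 1 := by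
      rcases lt_or_eq_of_le hdle with h | h
      · omega
      · exfalso
        apply hne
        rw [← leadingCoeff_eq_zero, leadingCoeff, h, hc0]
    obtain ⟨hdeq, hcard, hnodup⟩ := distinct_roots_aux r hne (d-1) c
      (fun k hk => (hc k (by omega)).2)
      (fun k hk => by
        have h1 := (hc (k+1) (by omega)).1
        have h2 := (hc k (by omega)).1
        exact lt_trans h1.2 h2.1)
      hdle'
    exact ⟨⟨fun _ => hdeq, fun h => absurd hS h⟩, hcard, hnodup⟩
  · -- degree d case
    have hprodpos : 0 < ∏ i, lam i := Finset.prod_pos fun i _ => hl i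
    have hcd : r.coeff d ≠ 0 := by
      rw [hcoeff]
      exact mul_ne_zero (mul_ne_zero (pow_ne_zero _ (by norm_num)) hprodpos.ne')
        (sub_ne_zero.2 fun h => hS h.symm)
    have hdd : r.natDegree = d := le_antisymm hdle (le_natDegree_of_ne_zero hcd)
    have hL : r.leadingCoeff = (-1 : ℝ) ^ d * (∏ i, lam i) * (1 - S) := by
      rw [leadingCoeff, hdd, hcoeff]
    have hsq : (-1:ℝ)^d * (-1:ℝ)^d = 1 := by rw [← mul_pow]; norm_num
    have hLe : (-1:ℝ)^d * r.leadingCoeff = (∏ i, lam i) * (1 - S) := by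
      rw [hL]
      calc (-1:ℝ)^d * ((-1:ℝ)^d * (∏ i, lam i) * (1 - S))
          = ((-1:ℝ)^d * (-1:ℝ)^d) * ((∏ i, lam i) * (1 - S)) := by ring
        _ = (∏ i, lam i) * (1 - S) := by rw [hsq, one_mul]
    have hdeg0 : 0 < r.degree := natDegree_pos_iff_degree_pos.1 (by omega)
    have hLne : r.leadingCoeff ≠ 0 := leadingCoeff_ne_zero.2 hne
    -- obtain the extra root e
    have hextra : ∃ e, r.IsRoot e ∧ (pp 0 < e ∨ e < 0) := by
      rcases lt_or_gt_of_ne (fun h : S = 1 => hS h) with hS1 | hS2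
      · -- S < 1 : extra root beyond pp 0
        have hLpos' : 0 < (-1:ℝ)^d * r.leadingCoeff := by
          rw [hLe]; exact mul_pos hprodpos (by linarith)
        have hs0 := hsign 0 hd
        simp only [Nat.sub_zero] at hs0
        rcases lt_or_gt_of_ne hLne with hLneg | hLpos
        · -- leadingCoeff < 0 : d odd, r (pp 0) > 0, r → -∞
          have hodd : Odd d := by
            by_contra h
            rw [(Nat.not_odd_iff_even.1 h).neg_one_pow, one_mul] at hLpos'
            linarith
          have heven : Even (d - 1) := Nat.Odd.sub_odd hodd odd_one
          rw [heven.neg_one_pow, one_mul] at hs0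
          have tend := tendsto_atBot_of_leadingCoeff_nonpos r hdeg0 hLneg.le
          obtain ⟨M, hM1, hM2⟩ := ((tend.eventually_lt_atBot 0).and
            (eventually_gt_atTop (pp 0))).exists
          obtain ⟨e, he, he0⟩ := intermediate_value_Ioo' hM2.le r.continuousOn
            (Set.mem_Ioo.2 ⟨hM1, hs0⟩)
          exact ⟨e, he0, Or.inl he.1⟩
        · -- leadingCoeff > 0 : d even, r (pp 0) < 0, r → +∞
          have heven : Even d := by
            by_contra h
            rw [(Nat.not_even_iff_odd.1 h).neg_one_pow] at hLpos'
            linarith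
          have hodd1 : Odd (d - 1) := Nat.Even.sub_odd hd heven odd_one
          rw [hodd1.neg_one_pow] at hs0
          have hs0' : eval (pp 0) r < 0 := by linarith
          have tend := tendsto_atTop_of_leadingCoeff_nonneg r hdeg0 hLpos.le
          obtain ⟨M, hM1, hM2⟩ := ((tend.eventually_gt_atTop 0).and
            (eventually_gt_atTop (pp 0))).exists
          obtain ⟨e, he, he0⟩ := intermediate_value_Ioo hM2.le r.continuousOn
            (Set.mem_Ioo.2 ⟨hs0', hM1⟩)
          exact ⟨e, he0, Or.inl he.1⟩
      · -- S > 1 : extra negative root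
        have hLe' : (-1:ℝ)^d * r.leadingCoeff < 0 := by
          rw [hLe]; exact mul_neg_of_pos_of_neg hprodpos (by linarith)
        set q : Polynomial ℝ := r.comp (-X) with hq
        have hqd : q.natDegree = d := by
          rw [hq, natDegree_comp, natDegree_neg, natDegree_X, mul_one, hdd]
        have hqne : q ≠ 0 := fun h => by
          rw [h, natDegree_zero] at hqd; omega
        have hqL : q.leadingCoeff = r.leadingCoeff * (-1:ℝ)^d := by
          rw [hq, leadingCoeff_comp (by rw [natDegree_neg, natDegree_X]; norm_num),
            leadingCoeff_neg, leadingCoeff_X, hdd]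
        have hqLneg : q.leadingCoeff < 0 := by rw [hqL]; linarith [hLe']
        have hqdeg : 0 < q.degree := natDegree_pos_iff_degree_pos.1 (by omega)
        have tend := tendsto_atBot_of_leadingCoeff_nonpos q hqdeg hqLneg.le
        obtain ⟨M, hM1, hM2⟩ := ((tend.eventually_lt_atBot 0).and
          (eventually_gt_atTop (0:ℝ))).exists
        have hMeval : eval (-M) r < 0 := by
          have : eval M q = eval (-M) r := by rw [hq, eval_comp]; simp
          linarith [this ▸ hM1]
        have h0 : (0:ℝ) < eval 0 r := by rw [hrdef, rr_eval_zero]; norm_num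
        obtain ⟨e, he, he0⟩ := intermediate_value_Ioo (by linarith : -M ≤ (0:ℝ))
          r.continuousOn (Set.mem_Ioo.2 ⟨hMeval, h0⟩)
        exact ⟨e, he0, Or.inr he.2⟩
    obtain ⟨e, heroot, hepos⟩ := hextra
    rcases hepos with hegt | helt
    · -- e > pp 0 : put e first
      set f : ℕ → ℝ := fun k => if k = 0 then e else c (k - 1) with hf
      obtain ⟨hdeq, hcard, hnodup⟩ := distinct_roots_aux r hne d f
        (fun k hk => by
          by_cases h0 : k = 0
          · simp only [hf, h0, if_pos rfl]; exact heroot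
          · simp only [hf, if_neg h0]
            exact (hc (k-1) (by omega)).2)
        (fun k hk => by
          by_cases h0 : k = 0
          · subst h0
            simp only [hf, if_neg (Nat.one_ne_zero), if_pos rfl, Nat.sub_self]
            have h1 := (hc 0 (by omega)).1
            calc c 0 < pp 0 := h1.2
              _ < e := hegt
          · simp only [hf, if_neg h0, if_neg (Nat.succ_ne_zero k), Nat.add_sub_cancel]
            have hk1 : k - 1 + 1 = k := by omega
            have h1 := (hc k (by omega)).1
            have h2 := (hc (k-1) (by omega)).1
            rw [hk1] at h2
            exact lt_trans h1.2 h2.1)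
        hdle
      exact ⟨⟨fun h => absurd h hS, fun _ => hdeq⟩, hcard, hnodup⟩
    · -- e < 0 : put e last
      set f : ℕ → ℝ := fun k => if k < d - 1 then c k else e with hf
      obtain ⟨hdeq, hcard, hnodup⟩ := distinct_roots_aux r hne d f
        (fun k hk => by
          by_cases h0 : k < d - 1
          · simp only [hf, if_pos h0]; exact (hc k (by omega)).2
          · simp only [hf, if_neg h0]; exact heroot)
        (fun k hk => by
          have hkd : k < d - 1 := by omega
          simp only [hf, if_pos hkd]
          by_cases h0 : k + 1 < d - 1
          · simp only [if_pos h0]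
            have h1 := (hc (k+1) (by omega)).1
            have h2 := (hc k (by omega)).1
            exact lt_trans h1.2 h2.1
          · simp only [if_neg h0]
            have h2 := (hc k (by omega)).1
            calc e < 0 := helt
              _ < pp (k+1) := hpppos _ (by omega)
              _ < c k := h2.1)
        hdle
      exact ⟨⟨fun h => absurd h hS, fun _ => hdeq⟩, hcard, hnodup⟩

/-- The polynomial `r(x) = ∏ᵢ(1 − λᵢx) + x·∑ᵢ αᵢ ∏_{j≠i}(1 − λⱼx)` has degree
`d−1` if `∑ᵢ αᵢ/λᵢ = 1` and degree exactly `d` otherwise; all its roots are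
real and pairwise distinct. -/
theorem r_degree_and_roots (d : ℕ) (α lam : Fin d → ℝ)
    (hlam : ∀ i, lam i ∈ Set.Ioo (0 : ℝ) 1)
    (hdist : Function.Injective lam)
    (halpha : ∀ i, 0 < α i)
    (r : Polynomial ℝ)
    (hr : r = ∏ i, (1 - C (lam i) * X) +
      X * ∑ i, C (α i) * ∏ j ∈ Finset.univ.erase i, (1 - C (lam j) * X)) :
    ((∑ i, α i / lam i = 1 → r.natDegree = d - 1) ∧
     (∑ i, α i / lam i ≠ 1 → r.natDegree = d)) ∧
    -- all roots are real: the real roots account for the full degree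
    (r.roots).card = r.natDegree ∧
    -- and pairwise distinct
    (r.roots).Nodup := by
  subst hr
  rcases Nat.eq_zero_or_pos d with rfl | hd
  · simp only [Finset.univ_eq_empty, Finset.prod_empty, Finset.sum_empty, mul_zero, add_zero]
    simp [Polynomial.roots_one]
  · set σ := Tuple.sort lam with hσ
    have hinj : Function.Injective (lam ∘ σ) := hdist.comp σ.injective
    have hsmono : StrictMono (lam ∘ σ) := (Tuple.monotone_sort lam).strictMono_of_injective hinj
    have hrr : rr (α ∘ σ) (lam ∘ σ) = ∏ i, (1 - C (lam i) * X) +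
        X * ∑ i, C (α i) * ∏ j ∈ Finset.univ.erase i, (1 - C (lam j) * X) := by
      rw [rr]
      congr 1
      · exact Equiv.prod_comp σ (fun i => 1 - C (lam i) * X)
      · congr 1
        rw [← Equiv.sum_comp σ (fun i => C (α i) * ∏ j ∈ Finset.univ.erase i, (1 - C (lam j) * X))]
        refine Finset.sum_congr rfl fun i _ => ?_
        congr 1
        have him : (Finset.univ.erase i).image σ = Finset.univ.erase (σ i) := by
          rw [Finset.image_erase σ.injective, Finset.image_univ_equiv]
        rw [← him, Finset.prod_image (fun a _ b _ h => σ.injective h)]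
        rfl
    have hSs : ∑ i, (α ∘ σ) i / (lam ∘ σ) i = ∑ i, α i / lam i :=
      Equiv.sum_comp σ (fun i => α i / lam i)
    have main := sorted_main d hd (α ∘ σ) (lam ∘ σ) (fun i => hlam _) hsmono (fun i => halpha _)
    rw [hrr, hSs] at main
    exact main
end

section
/- Let λ ∈ (0,1)^d be distinct and α ∈ ℝ_{>0}^d with Σ_{i=1}^d α_i/λ_i < 1. Then all d roots of the polynomial r(x) = Π_{i=1}^d(1 − λ_i x) + x·Σ_{i=1}^d α_i Π_{j≠i}(1 − λ_j x) are real and lie in the open interval (1, ∞). -/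
/-!
Put `μᵢ = 1/λᵢ > 1`. At `x = μₖ` every term of `r` but one vanishes, and
`r(μₖ) = μₖ αₖ ∏_{j ≠ k} (1 - λⱼ/λₖ)` has the sign `(-1)^#{j | μⱼ < μₖ}`. For large `x`,
`r(x) = ∏ᵢ (1 - λᵢx) · (1 + ∑ᵢ αᵢ x/(1 - λᵢx))` where the second factor tends to
`1 - ∑ᵢ αᵢ/λᵢ > 0`, so `r(x)` has the sign `(-1)^d`. Hence `r` changes sign between any two
consecutive points of `{μ₁, …, μ_d, M}` for `M` large, which gives `d` distinct roots above
`min μᵢ > 1`; since `deg r ≤ d`, these are all the roots.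
-/

open Finset Polynomial Filter Topology

lemma Finset.neg_one_pow_card_filter_neg_mul_prod_pos {ι : Type*} (s : Finset ι) {f : ι → ℝ}
    (hf : ∀ i ∈ s, f i ≠ 0) :
    0 < (-1) ^ #{i ∈ s | f i < 0} * ∏ i ∈ s, f i := by
  rw [← prod_filter_mul_prod_filter_not s (fun i => f i < 0), ← mul_assoc, ← prod_neg]
  refine mul_pos (prod_pos fun i hi => ?_) (prod_pos fun i hi => ?_)
  · exact neg_pos.2 (mem_filter.1 hi).2
  · obtain ⟨hs, hnn⟩ := mem_filter.1 hi
    exact lt_of_le_of_ne (not_lt.1 hnn) (hf i hs).symm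

lemma Polynomial.exists_isRoot_mem_Ioo_of_eval_mul_neg {p : ℝ[X]} {a b : ℝ} (hab : a ≤ b)
    (h : p.eval a * p.eval b < 0) : ∃ c ∈ Set.Ioo a b, p.IsRoot c := by
  have hc : ContinuousOn (fun x => p.eval x) (Set.Icc a b) := p.continuousOn
  rcases mul_neg_iff.1 h with ⟨ha, hb⟩ | ⟨ha, hb⟩
  · exact intermediate_value_Ioo' hab hc ⟨hb, ha⟩
  · exact intermediate_value_Ioo hab hc ⟨ha, hb⟩

lemma Polynomial.exists_strictMono_isRoot_of_alternating {p : ℝ[X]} {n : ℕ}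
    {x : Fin (n + 1) → ℝ} (hx : StrictMono x)
    (hsign : ∀ i : Fin (n + 1), 0 < (-1) ^ (i : ℕ) * p.eval (x i)) :
    ∃ y : Fin n → ℝ, StrictMono y ∧ ∀ i, x i.castSucc < y i ∧ p.IsRoot (y i) := by
  have hchange : ∀ i : Fin n, p.eval (x i.castSucc) * p.eval (x i.succ) < 0 := by
    intro i
    have hodd : (-1 : ℝ) ^ (i : ℕ) * (-1) ^ ((i : ℕ) + 1) = -1 := by
      rw [← pow_add]; exact Odd.neg_one_pow ⟨i, by ring⟩
    have := mul_pos (hsign i.castSucc) (hsign i.succ)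
    rw [Fin.val_castSucc, Fin.val_succ, mul_mul_mul_comm, hodd] at this
    linarith
  choose y hy hroot using fun i =>
    exists_isRoot_mem_Ioo_of_eval_mul_neg (hx Fin.castSucc_lt_succ).le (hchange i)
  refine ⟨y, fun i j hij => ?_, fun i => ⟨(hy i).1, hroot i⟩⟩
  calc y i < x i.succ := (hy i).2
    _ ≤ x j.castSucc := hx.monotone (Fin.succ_le_castSucc_iff.2 hij)
    _ < y j := (hy j).1

theorem Polynomial.card_roots_of_alternating {p : ℝ[X]} {n : ℕ}
    {x : Fin (n + 1) → ℝ} (hx : StrictMono x)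
    (hsign : ∀ i : Fin (n + 1), 0 < (-1) ^ (i : ℕ) * p.eval (x i)) (hdeg : p.natDegree ≤ n) :
    p.roots.card = n ∧ ∀ z ∈ p.roots, x 0 < z := by
  obtain ⟨y, hy, hroot⟩ := exists_strictMono_isRoot_of_alternating hx hsign
  have hp : p ≠ 0 := by
    rintro rfl
    simpa using hsign 0
  have hsub : univ.image y ⊆ p.roots.toFinset := by
    simpa [subset_iff, hp] using fun i => (hroot i).2
  have hcard : #(univ.image y) = n := by
    rw [card_image_of_injective _ hy.injective, card_fin]
  have hle : p.roots.toFinset.card ≤ n :=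
    (Multiset.toFinset_card_le _).trans ((card_roots' p).trans hdeg)
  have heq := eq_of_subset_of_card_le hsub (hcard.symm ▸ hle)
  refine ⟨le_antisymm ((card_roots' p).trans hdeg) ?_, fun z hz => ?_⟩
  · exact hcard ▸ (card_le_card hsub).trans (Multiset.toFinset_card_le _)
  · obtain ⟨i, -, rfl⟩ := mem_image.1 (heq ▸ Multiset.mem_toFinset.2 hz)
    exact (hx.monotone (Fin.zero_le _)).trans_lt (hroot i).1

lemma Finset.card_filter_lt_orderEmbOfFin {α : Type*} [LinearOrder α] (s : Finset α) {k : ℕ}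
    (h : #s = k) (i : Fin k) : #{w ∈ s | w < s.orderEmbOfFin h i} = i := by
  set x := s.orderEmbOfFin h
  have hs : univ.image x = s := s.image_orderEmbOfFin_univ h
  rw [← hs, filter_image, card_image_of_injective _ x.injective]
  simp only [OrderEmbedding.lt_iff_lt, filter_gt_eq_Iio, Fin.card_Iio]

theorem Polynomial.card_roots_of_alternating_finset {p : ℝ[X]} {s : Finset ℝ} {n : ℕ}
    (hs : #s = n + 1) (hsign : ∀ z ∈ s, 0 < (-1) ^ #{w ∈ s | w < z} * p.eval z)
    (hdeg : p.natDegree ≤ n) : p.roots.card = n ∧ ∀ z ∈ p.roots, ∃ w ∈ s, w < z := by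
  have hx (i : Fin (n + 1)) : 0 < (-1) ^ (i : ℕ) * p.eval (s.orderEmbOfFin hs i) := by
    simpa only [card_filter_lt_orderEmbOfFin] using hsign _ (s.orderEmbOfFin_mem hs i)
  obtain ⟨hcard, hgt⟩ := card_roots_of_alternating (s.orderEmbOfFin hs).strictMono hx hdeg
  exact ⟨hcard, fun z hz => ⟨_, s.orderEmbOfFin_mem hs 0, hgt z hz⟩⟩

lemma Polynomial.natDegree_prod_one_sub_C_mul_X_le {R ι : Type*} [CommRing R] (s : Finset ι)
    (c : ι → R) : (∏ i ∈ s, (1 - C (c i) * X)).natDegree ≤ #s := by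
  refine (natDegree_prod_le _ _).trans <|
    (sum_le_card_nsmul s _ 1 fun i _ => by compute_degree).trans (by simp)

lemma tendsto_one_add_sum_mul_div_one_sub_mul {ι : Type*} [Fintype ι] (α lam : ι → ℝ)
    (hlam : ∀ i, lam i ≠ 0) :
    Tendsto (fun x => 1 + ∑ i, α i * (x / (1 - lam i * x))) atTop
      (𝓝 (1 - ∑ i, α i / lam i)) := by
  have hterm (i : ι) : Tendsto (fun x => x / (1 - lam i * x)) atTop (𝓝 (-(lam i)⁻¹)) := by
    have hinv : Tendsto (fun x : ℝ => (x⁻¹ - lam i)⁻¹) atTop (𝓝 (-(lam i)⁻¹)) := by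
      simpa using (tendsto_inv_atTop_zero.sub_const (lam i)).inv₀ (by simpa using hlam i)
    refine hinv.congr' ?_
    filter_upwards [eventually_gt_atTop 0] with x hx
    have := hx.ne'
    field_simp
  have hlim : 1 - ∑ i, α i / lam i = 1 + ∑ i, α i * -(lam i)⁻¹ := by
    simp [div_eq_mul_inv, sum_neg_distrib, sub_eq_add_neg]
  rw [hlim]
  exact tendsto_const_nhds.add (tendsto_finsetSum _ fun i _ => (hterm i).const_mul (α i))

section SecularPoly

variable {ι : Type*} [Fintype ι] [DecidableEq ι] (α lam : ι → ℝ)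

/-- The polynomial `r` of the statement; away from the points `1/λᵢ` it is `∏ᵢ (1 - λᵢx)` times
the secular function `1 + ∑ᵢ αᵢ x/(1 - λᵢx)`. -/
noncomputable def secularPoly : ℝ[X] :=
  ∏ i, (1 - C (lam i) * X) + X * ∑ i, C (α i) * ∏ j ∈ univ.erase i, (1 - C (lam j) * X)

lemma natDegree_secularPoly_le : (secularPoly α lam).natDegree ≤ Fintype.card ι := by
  refine natDegree_add_le_of_degree_le (natDegree_prod_one_sub_C_mul_X_le _ _) ?_
  rw [mul_sum]
  refine natDegree_sum_le_of_forall_le _ _ fun i hi => ?_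
  rw [← card_univ, ← card_erase_add_one hi, add_comm]
  refine natDegree_mul_le_of_le natDegree_X_le ?_
  exact (natDegree_C_mul_le _ _).trans (natDegree_prod_one_sub_C_mul_X_le _ _)

lemma eval_secularPoly (x : ℝ) : (secularPoly α lam).eval x =
    ∏ i, (1 - lam i * x) + x * ∑ i, α i * ∏ j ∈ univ.erase i, (1 - lam j * x) := by
  simp [secularPoly, eval_prod, eval_finsetSum]

lemma eval_secularPoly_inv {k : ι} (hk : lam k ≠ 0) : (secularPoly α lam).eval (lam k)⁻¹ =
    (lam k)⁻¹ * (α k * ∏ j ∈ univ.erase k, (1 - lam j * (lam k)⁻¹)) := by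
  have hzero : 1 - lam k * (lam k)⁻¹ = 0 := by rw [mul_inv_cancel₀ hk, sub_self]
  rw [eval_secularPoly, prod_eq_zero (mem_univ k) hzero, zero_add, sum_eq_single k]
  · intro i _ hik
    rw [prod_eq_zero (mem_erase.2 ⟨Ne.symm hik, mem_univ k⟩) hzero, mul_zero]
  · simp

lemma neg_one_pow_mul_eval_secularPoly_inv_pos (hlam : ∀ i, 0 < lam i)
    (hinj : Function.Injective lam) {k : ι} (hα : 0 < α k) :
    0 < (-1) ^ #{j | lam k < lam j} * (secularPoly α lam).eval (lam k)⁻¹ := by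
  have hsign := (univ.erase k).neg_one_pow_card_filter_neg_mul_prod_pos
    (f := fun j => 1 - lam j * (lam k)⁻¹) fun j hj => by
      rw [sub_ne_zero, ne_comm, ne_eq, mul_inv_eq_one₀ (hlam k).ne']
      exact hinj.ne (mem_erase.1 hj).1
  have hfilter : #{j ∈ univ.erase k | 1 - lam j * (lam k)⁻¹ < 0} = #{j | lam k < lam j} := by
    congr 1
    ext j
    simp only [mem_filter, mem_erase, mem_univ, and_true, true_and, sub_neg,
      ← div_eq_mul_inv, one_lt_div (hlam k)]
    exact ⟨And.right, fun h => ⟨fun hjk => h.ne' (congrArg lam hjk), h⟩⟩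
  rw [hfilter] at hsign
  rw [eval_secularPoly_inv α lam (hlam k).ne', mul_left_comm, mul_left_comm _ (α k)]
  exact mul_pos (inv_pos.2 (hlam k)) (mul_pos hα hsign)

lemma eval_secularPoly_eq_prod_mul {x : ℝ} (hx : ∀ i, 1 - lam i * x ≠ 0) :
    (secularPoly α lam).eval x =
      (∏ i, (1 - lam i * x)) * (1 + ∑ i, α i * (x / (1 - lam i * x))) := by
  rw [eval_secularPoly, mul_add, mul_one, mul_sum, mul_sum]
  congr 1
  refine sum_congr rfl fun i _ => ?_
  rw [← mul_prod_erase univ (fun j => 1 - lam j * x) (mem_univ i)]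
  simp only [mul_div_assoc']
  rw [eq_div_iff (hx i)]
  ring

lemma eventually_neg_one_pow_mul_eval_secularPoly_pos (hlam : ∀ i, 0 < lam i)
    (hsum : ∑ i, α i / lam i < 1) :
    ∀ᶠ x in atTop, 0 < (-1) ^ Fintype.card ι * (secularPoly α lam).eval x := by
  have hfactors : ∀ᶠ x in atTop, ∀ i, 1 - lam i * x < 0 := by
    refine eventually_all.2 fun i => ?_
    filter_upwards [eventually_gt_atTop (lam i)⁻¹] with x hx
    rw [sub_neg, ← div_lt_iff₀' (hlam i), one_div]
    exact hx
  have hpos := (tendsto_one_add_sum_mul_div_one_sub_mul α lam fun i => (hlam i).ne').eventually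
    (eventually_gt_nhds (sub_pos.2 hsum))
  filter_upwards [hfactors, hpos] with x hx hxpos
  rw [eval_secularPoly_eq_prod_mul α lam fun i => (hx i).ne, ← mul_assoc, ← card_univ,
    ← prod_neg]
  exact mul_pos (prod_pos fun i _ => neg_pos.2 (hx i)) hxpos

lemma neg_one_pow_mul_eval_secularPoly_pos_on_insert_inv (hlam : ∀ i, 0 < lam i)
    (hinj : Function.Injective lam) (hα : ∀ i, 0 < α i) {M : ℝ} (hMlt : ∀ i, (lam i)⁻¹ < M)
    (hM : 0 < (-1) ^ Fintype.card ι * (secularPoly α lam).eval M) :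
    ∀ z ∈ insert M (univ.image fun i => (lam i)⁻¹),
      0 < (-1) ^ #{w ∈ insert M (univ.image fun i => (lam i)⁻¹) | w < z} *
        (secularPoly α lam).eval z := by
  have hinvinj : Function.Injective fun i => (lam i)⁻¹ := inv_injective.comp hinj
  intro z hz
  rcases mem_insert.1 hz with rfl | hz
  · rwa [filter_insert, if_neg (lt_irrefl z), filter_true_of_mem fun w hw => ?_,
      card_image_of_injective _ hinvinj, card_univ]
    obtain ⟨i, -, rfl⟩ := mem_image.1 hw
    exact hMlt i
  · obtain ⟨k, -, rfl⟩ := mem_image.1 hz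
    rw [filter_insert, if_neg (lt_asymm (hMlt k)), filter_image, card_image_of_injective _ hinvinj]
    simp only [inv_lt_inv₀ (hlam _) (hlam k)]
    exact neg_one_pow_mul_eval_secularPoly_inv_pos α lam hlam hinj (hα k)

end SecularPoly

/-- If `∑ᵢ αᵢ/λᵢ < 1`, all `d` roots of
`r(x) = ∏ᵢ(1 − λᵢx) + x·∑ᵢ αᵢ ∏_{j≠i}(1 − λⱼx)` are real and lie in `(1, ∞)`. -/
theorem r_roots_gt_one (d : ℕ) (α lam : Fin d → ℝ)
    (hlam : ∀ i, lam i ∈ Set.Ioo (0 : ℝ) 1)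
    (hdist : Function.Injective lam)
    (halpha : ∀ i, 0 < α i)
    (hsum : ∑ i, α i / lam i < 1)
    (r : Polynomial ℝ)
    (hr : r = ∏ i, (1 - C (lam i) * X) +
      X * ∑ i, C (α i) * ∏ j ∈ Finset.univ.erase i, (1 - C (lam j) * X)) :
    (r.roots).card = d ∧ ∀ x ∈ r.roots, 1 < x := by
  change r = secularPoly α lam at hr
  subst hr
  have hpos (i : Fin d) : 0 < lam i := (hlam i).1
  obtain ⟨M, hM, hM1, hMlt⟩ :=
    ((eventually_neg_one_pow_mul_eval_secularPoly_pos α lam hpos hsum).and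
      ((eventually_gt_atTop 1).and
        (eventually_all.2 fun i => eventually_gt_atTop (lam i)⁻¹))).exists
  set nodes := insert M (univ.image fun i => (lam i)⁻¹)
  have hcard : #nodes = d + 1 := by
    have hinj : Function.Injective fun i => (lam i)⁻¹ := inv_injective.comp hdist
    rw [card_insert_of_notMem, card_image_of_injective _ hinj, card_fin]
    simpa using fun i => (hMlt i).ne
  have hnodes : ∀ w ∈ nodes, 1 < w := by
    simpa [nodes, hM1] using fun i => one_lt_inv_iff₀.2 (hlam i)
  obtain ⟨hroots, hgt⟩ := card_roots_of_alternating_finset hcard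
    (neg_one_pow_mul_eval_secularPoly_pos_on_insert_inv α lam hpos hdist halpha hMlt hM)
    (by simpa using natDegree_secularPoly_le α lam)
  refine ⟨hroots, fun z hz => ?_⟩
  obtain ⟨w, hw, hwz⟩ := hgt z hz
  exact (hnodes w hw).trans hwz
end

section
/- Let λ ∈ (0,1)^d be distinct and α ∈ ℝ_{>0}^d with Σ_{i=1}^d α_i < 1 but Σ_{i=1}^d α_i/λ_i > 1. Then the polynomial r(x) = Π_{i=1}^d(1 − λ_i x) + x·Σ_{i=1}^d α_i Π_{j≠i}(1 − λ_j x) has exactly one root in (−∞, −1), and its remaining d − 1 roots are real and lie in (1, ∞). -/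
open Finset Polynomial

section helpers

lemma neg_one_pow_prod_pos {ι : Type*} {s : Finset ι} {f : ι → ℝ}
    (h : ∀ m ∈ s, f m < 0) : 0 < (-1 : ℝ) ^ s.card * ∏ m ∈ s, f m := by
  classical
  induction s using Finset.cons_induction with
  | empty => simp
  | cons a s ha ih =>
    rw [Finset.prod_cons, Finset.card_cons, pow_succ]
    have h1 := ih (fun m hm => h m (Finset.mem_cons_of_mem hm))
    have h2 := h a (Finset.mem_cons_self a s)
    nlinarith

lemma exists_root_Ioo_of_sign (f : Polynomial ℝ) {a b : ℝ} (hab : a < b)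
    (h : f.eval a * f.eval b < 0) : ∃ x ∈ Set.Ioo a b, f.eval x = 0 := by
  have hc : ContinuousOn (fun x => f.eval x) (Set.Icc a b) := (f.continuous_aeval).continuousOn
  rcases lt_or_ge (f.eval a) 0 with h1 | h1
  · have h2 : 0 < f.eval b := by nlinarith
    have := intermediate_value_Ioo hab.le hc
    have h0 : (0:ℝ) ∈ Set.Ioo (f.eval a) (f.eval b) := ⟨h1, h2⟩
    obtain ⟨x, hx, hfx⟩ := this h0
    exact ⟨x, hx, hfx⟩
  · have h2 : f.eval b < 0 := by nlinarith
    have h1' : 0 < f.eval a := lt_of_le_of_ne h1 (by intro he; rw [← he] at h; simp at h)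
    have := intermediate_value_Ioo' hab.le hc
    obtain ⟨x, hx, hfx⟩ := this ⟨h2, h1'⟩
    exact ⟨x, hx, hfx⟩

open scoped Classical in
lemma r_eval (d : ℕ) (α lam : Fin d → ℝ) (r : Polynomial ℝ)
    (hr : r = ∏ i, (1 - C (lam i) * X) +
      X * ∑ i, C (α i) * ∏ j ∈ Finset.univ.erase i, (1 - C (lam j) * X)) (x : ℝ) :
    r.eval x = ∏ i, (1 - lam i * x) + x * ∑ i, α i * ∏ j ∈ Finset.univ.erase i, (1 - lam j * x) := by
  subst hr
  simp [eval_prod, eval_finset_sum]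

open scoped Classical in
lemma r_eval_mu (d : ℕ) (α lam : Fin d → ℝ)
    (hlam : ∀ i, lam i ∈ Set.Ioo (0 : ℝ) 1) (r : Polynomial ℝ)
    (hr : r = ∏ i, (1 - C (lam i) * X) +
      X * ∑ i, C (α i) * ∏ j ∈ Finset.univ.erase i, (1 - C (lam j) * X)) (i : Fin d) :
    r.eval (lam i)⁻¹ =
      (lam i)⁻¹ * (α i * ∏ j ∈ Finset.univ.erase i, (1 - lam j * (lam i)⁻¹)) := by
  rw [r_eval d α lam r hr]
  have hz : (1 : ℝ) - lam i * (lam i)⁻¹ = 0 := by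
    rw [mul_inv_cancel₀ (hlam i).1.ne']; ring
  rw [Finset.prod_eq_zero (Finset.mem_univ i) hz]
  rw [Finset.sum_eq_single i]
  · ring
  · intro j _ hji
    rw [Finset.prod_eq_zero (Finset.mem_erase.2 ⟨hji.symm, Finset.mem_univ i⟩) hz, mul_zero]
  · simp

open scoped Classical in
lemma r_coeff_d (d : ℕ) (hd : 1 ≤ d) (α lam : Fin d → ℝ)
    (hlam : ∀ i, lam i ∈ Set.Ioo (0 : ℝ) 1) (r : Polynomial ℝ)
    (hr : r = ∏ i, (1 - C (lam i) * X) +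
      X * ∑ i, C (α i) * ∏ j ∈ Finset.univ.erase i, (1 - C (lam j) * X)) :
    r.natDegree ≤ d ∧
    r.coeff d = (-1 : ℝ) ^ (d - 1) *
      ((∑ i, α i * ∏ j ∈ Finset.univ.erase i, lam j) - ∏ i, lam i) := by
  have hfac : ∀ i : Fin d, (1 : ℝ[X]) - C (lam i) * X = C (-lam i) * X + C 1 := by
    intro i; rw [map_neg, map_one]; ring
  have hfne : ∀ i : Fin d, (1 : ℝ[X]) - C (lam i) * X ≠ 0 := by
    intro i h
    have := congrArg (eval 0) h
    simp at this
  have hfdeg : ∀ i : Fin d, ((1 : ℝ[X]) - C (lam i) * X).natDegree = 1 := by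
    intro i; rw [hfac i]; exact natDegree_linear (neg_ne_zero.2 (hlam i).1.ne')
  have hflead : ∀ i : Fin d, ((1 : ℝ[X]) - C (lam i) * X).leadingCoeff = -lam i := by
    intro i; rw [hfac i]; exact leadingCoeff_linear (neg_ne_zero.2 (hlam i).1.ne')
  set A : ℝ[X] := ∏ i, (1 - C (lam i) * X) with hA
  set B : ℝ[X] := ∑ i, C (α i) * ∏ j ∈ Finset.univ.erase i, (1 - C (lam j) * X) with hB
  have hAdeg : A.natDegree = d := by
    rw [hA, natDegree_prod _ _ (fun i _ => hfne i)]
    simp [hfdeg]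
  have hAlead : A.leadingCoeff = (-1 : ℝ) ^ d * ∏ i, lam i := by
    rw [hA, leadingCoeff_prod]
    simp only [hflead]
    rw [show (fun i : Fin d => -lam i) = fun i => (-1) * lam i by funext i; ring]
    rw [Finset.prod_mul_distrib, Finset.prod_const]
    simp
  have hPdeg : ∀ i : Fin d, (∏ j ∈ Finset.univ.erase i, ((1:ℝ[X]) - C (lam j) * X)).natDegree
      = d - 1 := by
    intro i
    rw [natDegree_prod _ _ (fun j _ => hfne j)]
    simp only [hfdeg]
    rw [Finset.sum_const, Finset.card_erase_of_mem (Finset.mem_univ i)]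
    simp
  have hPlead : ∀ i : Fin d, (∏ j ∈ Finset.univ.erase i, ((1:ℝ[X]) - C (lam j) * X)).leadingCoeff
      = (-1 : ℝ) ^ (d - 1) * ∏ j ∈ Finset.univ.erase i, lam j := by
    intro i
    rw [leadingCoeff_prod]
    simp only [hflead]
    rw [show (fun j : Fin d => -lam j) = fun j => (-1) * lam j by funext j; ring]
    rw [Finset.prod_mul_distrib, Finset.prod_const,
      Finset.card_erase_of_mem (Finset.mem_univ i), Finset.card_univ, Fintype.card_fin]
  have hBdeg : B.natDegree ≤ d - 1 := by
    refine natDegree_sum_le_of_forall_le _ _ (fun i _ => ?_)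
    refine le_trans (natDegree_C_mul_le _ _) ?_
    exact le_of_eq (hPdeg i)
  have hBcoeff : B.coeff (d - 1) =
      ∑ i, α i * ((-1 : ℝ) ^ (d - 1) * ∏ j ∈ Finset.univ.erase i, lam j) := by
    rw [hB, finset_sum_coeff]
    refine Finset.sum_congr rfl (fun i _ => ?_)
    rw [coeff_C_mul, ← hPdeg i, ← leadingCoeff, hPdeg i, hPlead i]
  have hrd : r.coeff d = (-1 : ℝ) ^ (d - 1) *
      ((∑ i, α i * ∏ j ∈ Finset.univ.erase i, lam j) - ∏ i, lam i) := by
    rw [hr, coeff_add]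
    have hd' : d = (d - 1) + 1 := (Nat.succ_pred_eq_of_pos hd).symm
    have hXB : (X * B).coeff d = B.coeff (d - 1) := by
      conv_lhs => rw [hd']
      exact coeff_X_mul B (d - 1)
    rw [hXB]
    rw [show A.coeff d = A.leadingCoeff by rw [leadingCoeff, hAdeg]]
    rw [hAlead, hBcoeff]
    have h1 : (-1 : ℝ) ^ d = (-1) ^ (d - 1) * (-1) := by rw [← pow_succ, ← hd']
    have hs : ∑ i, α i * ((-1:ℝ)^(d-1) * ∏ j ∈ Finset.univ.erase i, lam j)
        = (-1:ℝ)^(d-1) * ∑ i, α i * ∏ j ∈ Finset.univ.erase i, lam j := by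
      rw [Finset.mul_sum]; exact Finset.sum_congr rfl fun i _ => by ring
    rw [hs, h1]; ring
  refine ⟨?_, hrd⟩
  rw [hr]
  refine le_trans (natDegree_add_le _ _) (max_le (le_of_eq hAdeg) ?_)
  refine le_trans (natDegree_mul_le) ?_
  rw [natDegree_X]
  omega

end helpers

open scoped Classical in
/-- If `∑ᵢ αᵢ < 1` but `∑ᵢ αᵢ/λᵢ > 1`, then
`r(x) = ∏ᵢ(1 − λᵢx) + x·∑ᵢ αᵢ ∏_{j≠i}(1 − λⱼx)` has exactly one root in
`(−∞, −1)`, and its remaining `d − 1` roots are real and lie in `(1, ∞)`. -/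
theorem r_one_negative_root (d : ℕ) (α lam : Fin d → ℝ)
    (hlam : ∀ i, lam i ∈ Set.Ioo (0 : ℝ) 1)
    (hdist : Function.Injective lam)
    (halpha : ∀ i, 0 < α i)
    (hsum1 : ∑ i, α i < 1)
    (hsum2 : 1 < ∑ i, α i / lam i)
    (r : Polynomial ℝ)
    (hr : r = ∏ i, (1 - C (lam i) * X) +
      X * ∑ i, C (α i) * ∏ j ∈ Finset.univ.erase i, (1 - C (lam j) * X)) :
    (r.roots).card = d ∧
    ((r.roots).filter (fun x => x < -1)).card = 1 ∧
    ((r.roots).filter (fun x => 1 < x)).card = d - 1 := by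
  classical
  rcases Nat.eq_zero_or_pos d with hd0 | hd
  · subst hd0
    simp only [Finset.univ_eq_empty, Finset.sum_empty] at hsum2
    linarith
  have hlam0 : ∀ i, 0 < lam i := fun i => (hlam i).1
  have hlam1 : ∀ i, lam i < 1 := fun i => (hlam i).2
  have hmu1 : ∀ i, 1 < (lam i)⁻¹ := fun i => (one_lt_inv₀ (hlam0 i)).2 (hlam1 i)
  -- leading coefficient analysis
  have hprodpos : 0 < ∏ i, lam i := Finset.prod_pos (fun i _ => hlam0 i)
  have hc : 0 < (∑ i, α i * ∏ j ∈ Finset.univ.erase i, lam j) - ∏ i, lam i := by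
    have hterm : ∀ i : Fin d, α i * ∏ j ∈ Finset.univ.erase i, lam j
        = (α i / lam i) * ∏ j, lam j := by
      intro i
      rw [← Finset.mul_prod_erase _ _ (Finset.mem_univ i), div_mul_eq_mul_div,
        eq_div_iff (hlam0 i).ne']
      ring
    rw [Finset.sum_congr rfl (fun i _ => hterm i), ← Finset.sum_mul]
    nlinarith [hsum2, hprodpos]
  obtain ⟨hdeg_le, hcoeff⟩ := r_coeff_d d hd α lam hlam r hr
  have hcoeff_ne : r.coeff d ≠ 0 := by
    rw [hcoeff]
    exact mul_ne_zero (pow_ne_zero _ (by norm_num)) (ne_of_gt hc)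
  have hdeg : r.natDegree = d := le_antisymm hdeg_le (le_natDegree_of_ne_zero hcoeff_ne)
  have hrne : r ≠ 0 := fun h => hcoeff_ne (by simp [h])
  have hlead : r.leadingCoeff = (-1 : ℝ) ^ (d - 1) *
      ((∑ i, α i * ∏ j ∈ Finset.univ.erase i, lam j) - ∏ i, lam i) := by
    rw [leadingCoeff, hdeg, hcoeff]
  -- sorting
  set σ : Equiv.Perm (Fin d) := Tuple.sort (fun i => (lam i)⁻¹) with hσ
  have hmono : StrictMono (fun k => (lam (σ k))⁻¹) := by
    apply Monotone.strictMono_of_injective (Tuple.monotone_sort (fun i => (lam i)⁻¹))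
    have : Function.Injective ((fun i => (lam i)⁻¹) ∘ σ) :=
      Function.Injective.comp (fun i j h => hdist (inv_injective h)) σ.injective
    exact this
  -- signs at the sorted 1/λ values
  have hanti : ∀ a b : Fin d, a < b → lam (σ b) < lam (σ a) := by
    intro a b hab
    have h1 : (lam (σ a))⁻¹ < (lam (σ b))⁻¹ := hmono hab
    have e1 : lam (σ a) * (lam (σ a))⁻¹ = 1 := mul_inv_cancel₀ (hlam0 (σ a)).ne'
    have e2 : lam (σ b) * (lam (σ b))⁻¹ = 1 := mul_inv_cancel₀ (hlam0 (σ b)).ne'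
    nlinarith [hlam0 (σ a), hlam0 (σ b), inv_pos.2 (hlam0 (σ a)), inv_pos.2 (hlam0 (σ b))]
  have hsign : ∀ k : Fin d, 0 < (-1 : ℝ) ^ (k : ℕ) * r.eval ((lam (σ k))⁻¹) := by
    intro k
    rw [r_eval_mu d α lam hlam r hr (σ k)]
    have hre : ∏ j ∈ Finset.univ.erase (σ k), (1 - lam j * (lam (σ k))⁻¹)
        = ∏ m ∈ Finset.univ.erase k, (1 - lam (σ m) * (lam (σ k))⁻¹) := by
      rw [show Finset.univ.erase (σ k) = (Finset.univ.erase k).image σ from ?_,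
        Finset.prod_image (fun a _ b _ h => σ.injective h)]
      ext j
      simp only [Finset.mem_erase, Finset.mem_univ, and_true, Finset.mem_image, true_and]
      constructor
      · intro hj
        refine ⟨σ.symm j, fun h => hj ?_, σ.apply_symm_apply j⟩
        rw [← σ.apply_symm_apply j, h]
      · rintro ⟨m, hm, rfl⟩
        exact fun h => hm (σ.injective h)
    rw [hre]
    have hunion : Finset.univ.erase k = (Finset.Iio k) ∪ (Finset.Ioi k) := by
      ext m
      simp only [Finset.mem_erase, Finset.mem_univ, and_true, Finset.mem_union,
        Finset.mem_Iio, Finset.mem_Ioi]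
      constructor
      · exact fun h => lt_or_gt_of_ne h
      · rintro (h | h)
        · exact ne_of_lt h
        · exact ne_of_gt h
    have hdisj : Disjoint (Finset.Iio k) (Finset.Ioi k) := by
      rw [Finset.disjoint_left]
      intro m h1 h2
      rw [Finset.mem_Iio] at h1
      rw [Finset.mem_Ioi] at h2
      exact absurd (h1.trans h2) (lt_irrefl m)
    rw [hunion, Finset.prod_union hdisj]
    set Pneg := ∏ m ∈ Finset.Iio k, (1 - lam (σ m) * (lam (σ k))⁻¹) with hPneg
    set Ppos := ∏ m ∈ Finset.Ioi k, (1 - lam (σ m) * (lam (σ k))⁻¹) with hPpos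
    have hneg : ∀ m ∈ Finset.Iio k, (1 - lam (σ m) * (lam (σ k))⁻¹) < 0 := by
      intro m hm
      have h2 : lam (σ k) < lam (σ m) := hanti m k (Finset.mem_Iio.1 hm)
      have e2 : lam (σ k) * (lam (σ k))⁻¹ = 1 := mul_inv_cancel₀ (hlam0 (σ k)).ne'
      nlinarith [inv_pos.2 (hlam0 (σ k))]
    have hpos : ∀ m ∈ Finset.Ioi k, 0 < (1 - lam (σ m) * (lam (σ k))⁻¹) := by
      intro m hm
      have h2 : lam (σ m) < lam (σ k) := hanti k m (Finset.mem_Ioi.1 hm)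
      have e2 : lam (σ k) * (lam (σ k))⁻¹ = 1 := mul_inv_cancel₀ (hlam0 (σ k)).ne'
      nlinarith [inv_pos.2 (hlam0 (σ k))]
    have hNeg := neg_one_pow_prod_pos hneg
    rw [Fin.card_Iio] at hNeg
    have hPosP : 0 < Ppos := Finset.prod_pos hpos
    have hμ : 0 < (lam (σ k))⁻¹ := inv_pos.2 (hlam0 (σ k))
    have hα := halpha (σ k)
    have heq : (-1 : ℝ) ^ (k : ℕ) * ((lam (σ k))⁻¹ * (α (σ k) * (Pneg * Ppos)))
        = ((-1 : ℝ) ^ (k : ℕ) * Pneg) * ((lam (σ k))⁻¹ * (α (σ k) * Ppos)) := by ring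
    rw [heq]
    exact mul_pos hNeg (mul_pos hμ (mul_pos hα hPosP))
  -- r(-1) > 0
  have hneg1 : 0 < r.eval (-1) := by
    rw [r_eval d α lam r hr]
    have h1 : ∀ i : Fin d, (0 : ℝ) < 1 - lam i * (-1) := fun i => by nlinarith [hlam0 i]
    have hppos : 0 < ∏ i, (1 - lam i * (-1)) := Finset.prod_pos fun i _ => h1 i
    have hterm : ∀ i ∈ (Finset.univ : Finset (Fin d)),
        α i * ∏ j ∈ Finset.univ.erase i, (1 - lam j * (-1))
          < α i * ∏ j, (1 - lam j * (-1)) := by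
      intro i _
      apply mul_lt_mul_of_pos_left _ (halpha i)
      have he : ∏ j, (1 - lam j * (-1))
          = (1 - lam i * (-1)) * ∏ j ∈ Finset.univ.erase i, (1 - lam j * (-1)) :=
        (Finset.mul_prod_erase _ _ (Finset.mem_univ i)).symm
      have hepos : 0 < ∏ j ∈ Finset.univ.erase i, (1 - lam j * (-1)) :=
        Finset.prod_pos fun j _ => h1 j
      rw [he]
      nlinarith [hlam0 i]
    have hne : (Finset.univ : Finset (Fin d)).Nonempty := ⟨⟨0, hd⟩, Finset.mem_univ _⟩
    have hsumlt := Finset.sum_lt_sum_of_nonempty hne hterm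
    rw [← Finset.sum_mul] at hsumlt
    nlinarith [hsumlt, hppos, hsum1]
  -- a point y0 < -1 where r is negative
  obtain ⟨y0, hy0lt, hy0⟩ : ∃ y, y < -1 ∧ r.eval y < 0 := by
    set q : ℝ[X] := r.comp (-X) with hq
    have hXdeg : (-X : ℝ[X]).natDegree = 1 := by rw [natDegree_neg, natDegree_X]
    have hqdeg : q.natDegree = d := by
      rw [hq, natDegree_comp, hdeg, hXdeg, mul_one]
    have hqlead : q.leadingCoeff
        = -((∑ i, α i * ∏ j ∈ Finset.univ.erase i, lam j) - ∏ i, lam i) := by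
      rw [hq, leadingCoeff_comp (by rw [hXdeg]; norm_num), hlead, hdeg]
      have hlX : (-X : ℝ[X]).leadingCoeff = -1 := by
        rw [leadingCoeff_neg, leadingCoeff_X]
      rw [hlX]
      have hp : (-1 : ℝ) ^ (d - 1) * (-1 : ℝ) ^ d = -1 := by
        rw [← pow_add]
        exact Odd.neg_one_pow ⟨d - 1, by omega⟩
      nlinarith [hp]
    have hqne : q ≠ 0 := by
      intro h
      rw [h] at hqlead
      simp at hqlead
      linarith
    have hq0 : 0 < q.degree := natDegree_pos_iff_degree_pos.1 (by omega)
    have htend := Polynomial.tendsto_atBot_of_leadingCoeff_nonpos q hq0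
      (by rw [hqlead]; linarith)
    have hev : ∀ᶠ x in Filter.atTop, q.eval x < 0 :=
      htend.eventually (Filter.eventually_lt_atBot 0)
    obtain ⟨x, hx1, hx2⟩ := (hev.and (Filter.eventually_gt_atTop 1)).exists
    refine ⟨-x, by linarith, ?_⟩
    have hevq : q.eval x = r.eval (-x) := by rw [hq, eval_comp]; simp
    rw [← hevq]
    exact hx1
  -- the negative root
  obtain ⟨y, hy, hyroot⟩ : ∃ y, y < -1 ∧ r.eval y = 0 := by
    obtain ⟨x, hx, hx0⟩ := exists_root_Ioo_of_sign r hy0lt (mul_neg_of_neg_of_pos hy0 hneg1)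
    exact ⟨x, hx.2, hx0⟩
  -- roots between consecutive sorted 1/λ values
  have key : ∀ k l : Fin d, (k : ℕ) + 1 = (l : ℕ) →
      ∃ x, ((lam (σ k))⁻¹ < x ∧ x < (lam (σ l))⁻¹) ∧ r.eval x = 0 := by
    intro k l hkl
    have hlt : (lam (σ k))⁻¹ < (lam (σ l))⁻¹ := hmono (by rw [Fin.lt_def]; omega)
    have hm := mul_pos (hsign k) (hsign l)
    have hodd : ((-1 : ℝ)) ^ (k : ℕ) * ((-1 : ℝ)) ^ (l : ℕ) = -1 := by
      rw [← pow_add]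
      exact Odd.neg_one_pow ⟨(k : ℕ), by omega⟩
    have heq : ((-1 : ℝ) ^ (k : ℕ) * r.eval ((lam (σ k))⁻¹)) *
        ((-1 : ℝ) ^ (l : ℕ) * r.eval ((lam (σ l))⁻¹)) =
        ((-1 : ℝ) ^ (k : ℕ) * (-1 : ℝ) ^ (l : ℕ)) *
          (r.eval ((lam (σ k))⁻¹) * r.eval ((lam (σ l))⁻¹)) := by ring
    rw [heq, hodd] at hm
    obtain ⟨x, hx, hx0⟩ := exists_root_Ioo_of_sign r hlt (by linarith)
    exact ⟨x, ⟨hx.1, hx.2⟩, hx0⟩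
  -- the root function
  set v : Fin d → ℝ := fun k =>
    if h : (k : ℕ) + 1 < d then (key k ⟨(k : ℕ) + 1, h⟩ rfl).choose else y with hv
  have hvlt : ∀ (k : Fin d) (h : (k : ℕ) + 1 < d),
      ((lam (σ k))⁻¹ < v k ∧ v k < (lam (σ ⟨(k : ℕ) + 1, h⟩))⁻¹) ∧ r.eval (v k) = 0 := by
    intro k h
    simp only [hv, dif_pos h]
    exact (key k ⟨(k : ℕ) + 1, h⟩ rfl).choose_spec
  have hvy : ∀ k : Fin d, ¬((k : ℕ) + 1 < d) → v k = y := by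
    intro k h; simp only [hv, dif_neg h]
  have hv1 : ∀ (k : Fin d), (k : ℕ) + 1 < d → 1 < v k := by
    intro k h
    have := (hvlt k h).1.1
    have := hmu1 (σ k)
    linarith
  have hvroot : ∀ k : Fin d, r.eval (v k) = 0 := by
    intro k
    by_cases h : (k : ℕ) + 1 < d
    · exact (hvlt k h).2
    · rw [hvy k h]; exact hyroot
  have hinj : Function.Injective v := by
    have main : ∀ a b : Fin d, a < b → v a ≠ v b := by
      intro a b hab
      have hab' : (a : ℕ) < (b : ℕ) := hab
      by_cases hb : (b : ℕ) + 1 < d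
      · have ha : (a : ℕ) + 1 < d := by omega
        have h1 : v a < (lam (σ ⟨(a : ℕ) + 1, ha⟩))⁻¹ := (hvlt a ha).1.2
        have h2 : (lam (σ (⟨(a : ℕ) + 1, ha⟩ : Fin d)))⁻¹ ≤ (lam (σ b))⁻¹ :=
          hmono.monotone (by rw [Fin.le_def]; simpa using hab')
        have h3 : (lam (σ b))⁻¹ < v b := (hvlt b hb).1.1
        exact ne_of_lt (by linarith)
      · rw [hvy b hb]
        have ha : (a : ℕ) + 1 < d := by omega
        have := hv1 a ha
        exact ne_of_gt (by linarith)
    intro a b hab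
    by_contra hne
    rcases lt_trichotomy a b with h | h | h
    · exact main a b h hab
    · exact hne h
    · exact main b a h hab.symm
  -- counting
  set S : Finset ℝ := Finset.univ.image v with hS
  have hScard : S.card = d := by
    rw [hS, Finset.card_image_of_injective _ hinj, Finset.card_univ, Fintype.card_fin]
  have hSsub : S.val ≤ r.roots := by
    rw [Multiset.le_iff_count]
    intro a
    by_cases ha : a ∈ S
    · rw [Multiset.count_eq_one_of_mem S.nodup ha, Multiset.one_le_count_iff_mem]
      obtain ⟨k, _, hk⟩ := Finset.mem_image.1 ha
      exact (mem_roots hrne).2 (hk ▸ hvroot k)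
    · rw [Multiset.count_eq_zero_of_notMem (by simpa using ha)]
      exact Nat.zero_le _
  have hcards : Multiset.card r.roots = d := by
    refine le_antisymm (hdeg ▸ r.card_roots') ?_
    calc d = Multiset.card S.val := by rw [← hScard]; rfl
    _ ≤ Multiset.card r.roots := Multiset.card_le_card hSsub
  have hroots_eq : r.roots = S.val := by
    symm
    exact Multiset.eq_of_le_of_card_le hSsub (by rw [hcards, ← hScard]; rfl)
  -- last index
  have hlast : (⟨d - 1, by omega⟩ : Fin d) ∈ (Finset.univ : Finset (Fin d)) := Finset.mem_univ _
  have hylast : v ⟨d - 1, by omega⟩ = y := hvy _ (by simp; omega)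
  have hyS : y ∈ S := Finset.mem_image.2 ⟨⟨d - 1, by omega⟩, Finset.mem_univ _, hylast⟩
  constructor
  · exact hcards
  constructor
  · rw [hroots_eq, ← Finset.filter_val, show S.filter (fun x => x < -1) = {y} from ?_]
    · rfl
    ext z
    simp only [Finset.mem_filter, Finset.mem_singleton, hS, Finset.mem_image, Finset.mem_univ,
      true_and]
    constructor
    · rintro ⟨⟨k, rfl⟩, hz⟩
      by_cases h : (k : ℕ) + 1 < d
      · exact absurd hz (by have := hv1 k h; linarith)
      · rw [hvy k h]
    · rintro rfl
      exact ⟨⟨⟨d - 1, by omega⟩, hylast⟩, hy⟩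
  · rw [hroots_eq, ← Finset.filter_val, show S.filter (fun x => 1 < x) = S.erase y from ?_]
    · rw [Finset.card_val, Finset.card_erase_of_mem hyS, hScard]
    ext z
    simp only [Finset.mem_filter, Finset.mem_erase]
    constructor
    · rintro ⟨hzS, hz⟩
      exact ⟨by rintro rfl; linarith, hzS⟩
    · rintro ⟨hzy, hzS⟩
      refine ⟨hzS, ?_⟩
      obtain ⟨k, _, rfl⟩ := Finset.mem_image.1 hzS
      by_cases h : (k : ℕ) + 1 < d
      · exact hv1 k h
      · exact absurd (hvy k h) hzy
end

section
/- Let λ, λ̂ ∈ ℝ^d satisfy the strict interlacing 1 > λ_1 > λ̂_1 > λ_2 > λ̂_2 > ⋯ > λ_d > λ̂_d > 0, and define α_i = (Π_{j=1}^d (λ_i − λ̂_j)) / (Π_{j≠i} (λ_i − λ_j)). Then α_i > 0 for every i ∈ [d], and moreover Σ_{i=1}^d α_i/λ_i = 1 − (Π_{i=1}^d λ̂_i)/(Π_{i=1}^d λ_i) < 1. -/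
/-!
The `αᵢ` are the residues in the partial fraction decomposition
`∏ⱼ (t - λ̂ⱼ) / ∏ⱼ (t - λⱼ) = 1 + ∑ᵢ αᵢ / (t - λᵢ)`. Cleared of denominators, this is Lagrange
interpolation of `∏ⱼ (t - λ̂ⱼ) - ∏ⱼ (t - λⱼ)`, a polynomial of degree `< d`, at the nodes `λᵢ`;
evaluating it at `t = 0` gives the sum formula. For positivity write
`αᵢ = (λᵢ - λ̂ᵢ) ∏_{j ≠ i} (λᵢ - λ̂ⱼ) / (λᵢ - λⱼ)`: by interlacing, `λ̂ⱼ` and `λⱼ` lie on the same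
side of `λᵢ`, so every factor is positive.
-/

open Finset

namespace Lagrange

open Polynomial

variable {F ι : Type*} [Field F] [DecidableEq ι] {s : Finset ι} {v : ι → F}

omit [DecidableEq ι] in
theorem degree_nodal_sub_nodal_lt (w : ι → F) :
    (nodal s w - nodal s v).degree < #s := by
  have hdeg : (nodal s w).degree = (nodal s v).degree := by rw [degree_nodal, degree_nodal]
  have hlc : (nodal s w).leadingCoeff = (nodal s v).leadingCoeff := by
    rw [nodal_monic.leadingCoeff, nodal_monic.leadingCoeff]
  simpa only [degree_nodal] using degree_sub_lt_left hdeg nodal_ne_zero hlc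

theorem nodal_sub_nodal_eq_sum (hvs : Set.InjOn v s) (w : ι → F) :
    nodal s w - nodal s v =
      ∑ i ∈ s, C (eval (v i) (nodal s w) * nodalWeight s v i) * nodal (s.erase i) v := by
  rw [eq_interpolate hvs (degree_nodal_sub_nodal_lt w), interpolate_apply]
  refine sum_congr rfl fun i hi => ?_
  rw [eval_sub, eval_nodal_at_node hi, sub_zero, basis_eq_prod_sub_inv_mul_nodal_div hi,
    ← nodal_erase_eq_nodal_div hi, C_mul, mul_assoc]

theorem prod_sub_prod_eq_sum (hvs : Set.InjOn v s) (w : ι → F) :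
    ∏ i ∈ s, v i - ∏ i ∈ s, w i =
      ∑ i ∈ s, (∏ j ∈ s, (v i - w j)) * nodalWeight s v i * ∏ j ∈ s.erase i, v j := by
  rcases s.eq_empty_or_nonempty with rfl | hs
  · simp
  obtain ⟨m, hm⟩ : ∃ m, #s = m + 1 := ⟨#s - 1, (Nat.sub_add_cancel hs.card_pos).symm⟩
  have h := congrArg (eval 0) (nodal_sub_nodal_eq_sum hvs w)
  have h0 : ∀ i ∈ s, eval 0 (nodal (s.erase i) v) = (-1) ^ m * ∏ j ∈ s.erase i, v j := by
    intro i hi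
    rw [eval_nodal]
    simp only [zero_sub, prod_neg, card_erase_of_mem hi, hm, Nat.add_sub_cancel]
  rw [eval_finsetSum, sum_congr rfl fun i hi => by rw [eval_mul, eval_C, h0 i hi, mul_left_comm],
    ← mul_sum, eval_sub] at h
  simp only [eval_nodal, zero_sub, prod_neg, hm] at h
  refine mul_left_cancel₀ (pow_ne_zero m (neg_ne_zero.2 one_ne_zero)) ?_
  rw [← h]
  ring

end Lagrange

section PartialFractions

variable {F ι : Type*} [Field F] [DecidableEq ι] {s : Finset ι} {v : ι → F}

theorem sum_prod_sub_div_prod_erase_sub_div_eq (hvs : Set.InjOn v s) (hv : ∀ i ∈ s, v i ≠ 0)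
    (w : ι → F) :
    ∑ i ∈ s, (∏ j ∈ s, (v i - w j)) / (∏ j ∈ s.erase i, (v i - v j)) / v i =
      1 - (∏ i ∈ s, w i) / ∏ i ∈ s, v i := by
  have hprod : ∏ i ∈ s, v i ≠ 0 := prod_ne_zero_iff.2 hv
  calc ∑ i ∈ s, (∏ j ∈ s, (v i - w j)) / (∏ j ∈ s.erase i, (v i - v j)) / v i
      = ∑ i ∈ s, (∏ j ∈ s, (v i - w j)) * Lagrange.nodalWeight s v i *
          (∏ j ∈ s.erase i, v j) / ∏ i ∈ s, v i := by
        refine sum_congr rfl fun i hi => ?_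
        have herase : ∏ j ∈ s.erase i, v j ≠ 0 :=
          prod_ne_zero_iff.2 fun j hj => hv j (mem_of_mem_erase hj)
        rw [Lagrange.nodalWeight, prod_inv_distrib, ← mul_prod_erase s v hi]
        field_simp
    _ = 1 - (∏ i ∈ s, w i) / ∏ i ∈ s, v i := by
        rw [← sum_div, ← Lagrange.prod_sub_prod_eq_sum hvs, sub_div, div_self hprod]

end PartialFractions

section Interlacing

variable {𝕜 : Type*} [Field 𝕜] [LinearOrder 𝕜] [IsStrictOrderedRing 𝕜]

theorem prod_sub_div_prod_erase_sub_pos {ι : Type*} [DecidableEq ι] {s : Finset ι}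
    {v w : ι → 𝕜} {i : ι} (hi : i ∈ s) (hwv : w i < v i)
    (hsign : ∀ j ∈ s.erase i, 0 < (v i - w j) / (v i - v j)) :
    0 < (∏ j ∈ s, (v i - w j)) / ∏ j ∈ s.erase i, (v i - v j) := by
  rw [← mul_prod_erase s _ hi, mul_div_assoc, ← prod_div_distrib]
  exact mul_pos (sub_pos.2 hwv) (prod_pos hsign)

variable {α : Type*} [Preorder α] {d : ℕ} {a b : Fin d → α}

theorem strictAnti_of_interlacing (h1 : ∀ i, b i < a i)
    (h2 : ∀ i j : Fin d, (j : ℕ) = i + 1 → a j < b i) : StrictAnti a := by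
  cases d with
  | zero => exact Subsingleton.strictAnti a
  | succ n => exact Fin.strictAnti_iff_succ_lt.2 fun i => (h2 _ _ rfl).trans (h1 _)

theorem lt_of_interlacing (h1 : ∀ i, b i < a i)
    (h2 : ∀ i j : Fin d, (j : ℕ) = i + 1 → a j < b i) {i j : Fin d} (hji : j < i) :
    a i < b j := by
  have hsucc : (j : ℕ) + 1 < d := by omega
  calc a i ≤ a ⟨j + 1, hsucc⟩ :=
        (strictAnti_of_interlacing h1 h2).antitone (Nat.succ_le_of_lt hji)
    _ < b j := h2 _ _ rfl

end Interlacing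

theorem alpha_pos_and_sum_general (d : ℕ) (lam lamh : Fin d → ℝ)
    (hpos : ∀ i, 0 < lamh i)
    (h1 : ∀ i, lamh i < lam i)
    (h2 : ∀ i j : Fin d, (j : ℕ) = (i : ℕ) + 1 → lam j < lamh i)
    (α : Fin d → ℝ)
    (hα : ∀ i, α i = (∏ j, (lam i - lamh j)) /
      ∏ j ∈ Finset.univ.erase i, (lam i - lam j)) :
    (∀ i, 0 < α i) ∧
    ∑ i, α i / lam i = 1 - (∏ i, lamh i) / (∏ i, lam i) ∧
    ∑ i, α i / lam i < 1 := by
  obtain rfl : α = _ := funext hα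
  have hanti : StrictAnti lam := strictAnti_of_interlacing h1 h2
  have hlam : ∀ i, 0 < lam i := fun i => (hpos i).trans (h1 i)
  have hsum := sum_prod_sub_div_prod_erase_sub_div_eq (s := univ) hanti.injective.injOn
    (fun i _ => (hlam i).ne') lamh
  refine ⟨fun i => ?_, hsum, ?_⟩
  · refine prod_sub_div_prod_erase_sub_pos (mem_univ i) (h1 i) fun j hj => ?_
    rcases lt_or_gt_of_ne (ne_of_mem_erase hj) with hji | hij
    · exact div_pos_of_neg_of_neg (sub_neg.2 (lt_of_interlacing h1 h2 hji))
        (sub_neg.2 (hanti hji))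
    · exact div_pos (sub_pos.2 ((h1 j).trans (hanti hij))) (sub_pos.2 (hanti hij))
  · rw [hsum]
    exact sub_lt_self 1 (div_pos (prod_pos fun i _ => hpos i) (prod_pos fun i _ => hlam i))

/-- Under strict interlacing `1 > λ₁ > λ̂₁ > λ₂ > λ̂₂ > ⋯ > λ_d > λ̂_d > 0`,
the scale parameters `αᵢ = ∏ⱼ(λᵢ − λ̂ⱼ) / ∏_{j≠i}(λᵢ − λⱼ)` are positive, and
`∑ᵢ αᵢ/λᵢ = 1 − (∏ᵢ λ̂ᵢ)/(∏ᵢ λᵢ) < 1`. -/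
theorem alpha_pos_and_sum (d : ℕ) (lam lamh : Fin d → ℝ)
    (hlt1 : ∀ i, lam i < 1)
    (hpos : ∀ i, 0 < lamh i)
    (h1 : ∀ i, lamh i < lam i)
    (h2 : ∀ i j : Fin d, (j : ℕ) = (i : ℕ) + 1 → lam j < lamh i)
    (α : Fin d → ℝ)
    (hα : ∀ i, α i = (∏ j, (lam i - lamh j)) /
      ∏ j ∈ Finset.univ.erase i, (lam i - lam j)) :
    (∀ i, 0 < α i) ∧
    ∑ i, α i / lam i = 1 - (∏ i, lamh i) / (∏ i, lam i) ∧
    ∑ i, α i / lam i < 1 :=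
  alpha_pos_and_sum_general d lam lamh hpos h1 h2 α hα
end

section
/- Let λ ∈ (0,1)^d be distinct, and let α ∈ ℝ_{>0}^d satisfy Σ_{i=1}^d α_i < 1 and Σ_{i=1}^d α_i/λ_i < 1. Then there exist distinct λ̂ ∈ (0,1)^d and α̂ ∈ ℝ^d with all α̂_i < 0 such that for every positive integer n, BLT_n(α, λ)^{-1} = BLT_n(α̂, λ̂). -/
/-!
The first column of `BLT_n(α, λ)` has generating function `1 + ∑ αᵢ z / (1 - λᵢ z) = G(1/z)` with
`G(x) = 1 + ∑ αᵢ / (x - λᵢ)` (`bltSymbol α lam`), and lower-triangular Toeplitz matrices multiply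
like truncated power series. So `BLT(β, μ)` inverts `BLT(α, λ)` as soon as
`H(x) = 1 + ∑ βⱼ / (x - μⱼ)` equals `1 / G(x)`, i.e. the `μⱼ` are the zeros of `G` and the `λᵢ`
those of `H`; a geometric-sum computation turns these two facts into the convolution identity.

Clearing denominators, the zeros of `G` are the roots of a real polynomial of degree `d` whose sign
alternates along `0 < λ₍₁₎ < ⋯ < λ₍d₎` (at `0` because `∑ αᵢ / λᵢ < 1`), which yields interlacing
roots `0 < μ₁ < λ₍₁₎ < μ₂ < ⋯ < μ_d < λ₍d₎`. Then `H` must be the partial fraction expansion of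
`∏ (x - λᵢ) / ∏ (x - μⱼ)`, and interlacing makes every residue `βⱼ` negative.
-/

open Finset

/-- The `n × n` lower-triangular Toeplitz matrix whose first column is
`a 0, a 1, a 2, …`. -/
def ltToeplitz (n : ℕ) (a : ℕ → ℝ) : Matrix (Fin n) (Fin n) ℝ :=
  Matrix.of fun j k => if (k : ℕ) ≤ (j : ℕ) then a ((j : ℕ) - (k : ℕ)) else 0

/-- First column of the BLT matrix: `1, ∑ αᵢ, ∑ αᵢλᵢ, ∑ αᵢλᵢ², …` -/
def bltCoef (d : ℕ) (α lam : Fin d → ℝ) : ℕ → ℝ :=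
  fun t => if t = 0 then 1 else ∑ i, α i * lam i ^ (t - 1)

section OrderedRing

variable {R : Type*} [CommRing R] [LinearOrder R] [IsStrictOrderedRing R]

lemma neg_one_pow_card_filter_mul_prod_pos {ι : Type*} {s : Finset ι} {f : ι → R}
    (p : ι → Prop) [DecidablePred p] (hneg : ∀ k ∈ s, p k → f k < 0)
    (hpos : ∀ k ∈ s, ¬ p k → 0 < f k) :
    0 < (-1) ^ #(s.filter p) * ∏ k ∈ s, f k := by
  rw [← prod_const, prod_filter, ← prod_mul_distrib]
  refine prod_pos fun k hk => ?_
  split_ifs with h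
  · linarith [hneg k hk h]
  · simpa using hpos k hk h

lemma mul_neg_of_neg_one_pow_succ {x y : R} {n : ℕ} (hx : 0 < (-1) ^ (n + 1) * x)
    (hy : 0 < (-1) ^ n * y) : x * y < 0 := by
  have hsq : ((-1 : R) ^ n) * (-1) ^ n = 1 := by rw [← mul_pow]; norm_num
  have hprod : (-1) ^ (n + 1) * x * ((-1) ^ n * y) = -(x * y) := by
    rw [pow_succ]; linear_combination (-(x * y)) * hsq
  linarith [mul_pos hx hy]

end OrderedRing

lemma exists_mem_Ioo_eq_zero_of_neg_one_pow {f : ℝ → ℝ} (hf : Continuous f) {a b : ℝ}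
    (hab : a ≤ b) {n : ℕ} (ha : 0 < (-1) ^ (n + 1) * f a) (hb : 0 < (-1) ^ n * f b) :
    ∃ x ∈ Set.Ioo a b, f x = 0 := by
  rcases mul_neg_iff.mp (mul_neg_of_neg_one_pow_succ ha hb) with ⟨hfa, hfb⟩ | ⟨hfa, hfb⟩
  · exact intermediate_value_Ioo' hab hf.continuousOn ⟨hfb, hfa⟩
  · exact intermediate_value_Ioo hab hf.continuousOn ⟨hfa, hfb⟩

lemma ltToeplitz_mul (n : ℕ) (a b : ℕ → ℝ) :
    ltToeplitz n a * ltToeplitz n b =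
      ltToeplitz n fun t => ∑ s ∈ range (t + 1), a (t - s) * b s := by
  ext j k
  simp only [Matrix.mul_apply, ltToeplitz, Matrix.of_apply, ite_mul, zero_mul, mul_ite, mul_zero]
  rw [Fin.sum_univ_eq_sum_range (fun s => if k ≤ s then if s ≤ j then a (j - s) * b (s - k)
    else 0 else 0)]
  split_ifs with hkj
  · rw [← sum_subset (s₁ := Ico (k : ℕ) (j + 1)), sum_Ico_eq_sum_range]
    · refine sum_congr (by congr 1; omega) fun u hu => ?_
      rw [mem_range] at hu
      rw [if_pos (by omega), if_pos (by omega)]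
      congr 2 <;> omega
    · intro s hs; simp only [mem_Ico, mem_range] at hs ⊢; omega
    · intro s _ hs
      simp only [mem_Ico, not_and_or, not_le, not_lt] at hs
      split_ifs <;> first | rfl | omega
  · exact sum_eq_zero fun s _ => by split_ifs <;> first | rfl | omega

lemma ltToeplitz_delta (n : ℕ) : ltToeplitz n (fun t => if t = 0 then 1 else 0) = 1 := by
  ext j k
  simp only [ltToeplitz, Matrix.of_apply, Matrix.one_apply, Fin.ext_iff]
  split_ifs <;> first | rfl | omega

def bltSymbol {ι K : Type*} [Fintype ι] [Field K] (α lam : ι → K) (x : K) : K :=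
  1 + ∑ i, α i / (x - lam i)

def bltSymbolNum {ι K : Type*} [Fintype ι] [DecidableEq ι] [Field K] (α lam : ι → K) (x : K) :
    K :=
  ∏ k, (x - lam k) + ∑ i, α i * ∏ k ∈ univ.erase i, (x - lam k)

section Field

variable {ι K : Type*} [Fintype ι] [DecidableEq ι] [Field K]

lemma prod_sub_mul_bltSymbol (α lam : ι → K) {x : K} (hx : ∀ i, x ≠ lam i) :
    (∏ k, (x - lam k)) * bltSymbol α lam x = bltSymbolNum α lam x := by
  rw [bltSymbol, bltSymbolNum, mul_add, mul_one, mul_sum]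
  congr 1
  refine sum_congr rfl fun i _ => ?_
  rw [← mul_prod_erase _ _ (mem_univ i)]
  field_simp [sub_ne_zero.mpr (hx i)]

lemma bltSymbolNum_apply_self (α lam : ι → K) (i : ι) :
    bltSymbolNum α lam (lam i) = α i * ∏ k ∈ univ.erase i, (lam i - lam k) := by
  rw [bltSymbolNum, prod_eq_zero (mem_univ i) (sub_self _), zero_add,
    sum_eq_single i (fun j _ hji => by
      rw [prod_eq_zero (mem_erase.mpr ⟨Ne.symm hji, mem_univ i⟩) (sub_self _), mul_zero])
    (fun h => absurd (mem_univ i) h)]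

open Lagrange Polynomial in
lemma bltSymbol_nodalWeight {lam mu : ι → K} (hmu : Function.Injective mu) {x : K}
    (hx : ∀ j, x ≠ mu j) :
    bltSymbol (fun j => nodalWeight univ mu j * (nodal univ lam).eval (mu j)) mu x =
      (nodal univ lam).eval x / (nodal univ mu).eval x := by
  have hdeg : (nodal univ lam - nodal univ mu).degree < #(univ : Finset ι) := by
    rw [← degree_nodal (v := lam)]
    exact degree_sub_lt_left (by rw [degree_nodal, degree_nodal]) nodal_ne_zero
      (by rw [nodal_monic.leadingCoeff, nodal_monic.leadingCoeff])
  have hB : (nodal univ mu).eval x ≠ 0 := eval_nodal_not_at_node fun j _ => hx j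
  have h := congrArg (eval x) (eq_interpolate hmu.injOn hdeg)
  rw [eval_interpolate_not_at_node _ fun j _ => hx j] at h
  simp only [eval_sub, eval_nodal_at_node (mem_univ _), sub_zero] at h
  rw [bltSymbol, eq_div_iff hB]
  rw [sum_congr rfl fun j _ => by rw [div_eq_mul_inv, mul_right_comm]]
  linear_combination -h

end Field

lemma bltCoef_zero (d : ℕ) (α lam : Fin d → ℝ) : bltCoef d α lam 0 = 1 := rfl

lemma bltCoef_succ (d : ℕ) (α lam : Fin d → ℝ) (t : ℕ) :
    bltCoef d α lam (t + 1) = ∑ i, α i * lam i ^ t := by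
  simp [bltCoef]

lemma sum_bltCoef_mul_bltCoef {d : ℕ} {α lam β mu : Fin d → ℝ} (hne : ∀ i j, lam i ≠ mu j)
    (hα : ∀ j, bltSymbol α lam (mu j) = 0) (hβ : ∀ i, bltSymbol β mu (lam i) = 0) (t : ℕ) :
    ∑ s ∈ range (t + 1), bltCoef d α lam (t - s) * bltCoef d β mu s =
      if t = 0 then 1 else 0 := by
  rcases t with _ | T
  · simp [bltCoef]
  have hmid : ∑ s ∈ range T, bltCoef d α lam (T - s) * bltCoef d β mu (s + 1) =
      ∑ i, ∑ j, α i * β j * ((lam i ^ T - mu j ^ T) / (lam i - mu j)) := by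
    calc _ = ∑ s ∈ range T, ∑ i, ∑ j, α i * β j * (mu j ^ s * lam i ^ (T - 1 - s)) :=
          sum_congr rfl fun s hs => by
            rw [show T - s = T - 1 - s + 1 by have := mem_range.mp hs; omega, bltCoef_succ,
              bltCoef_succ, sum_mul_sum]
            exact sum_congr rfl fun i _ => sum_congr rfl fun j _ => by ring
      _ = ∑ i, ∑ j, α i * β j * ∑ s ∈ range T, mu j ^ s * lam i ^ (T - 1 - s) := by
          rw [sum_comm]
          exact sum_congr rfl fun i _ => by rw [sum_comm]; simp only [mul_sum]
      _ = _ := by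
          refine sum_congr rfl fun i _ => sum_congr rfl fun j _ => ?_
          congr 1
          rw [eq_div_iff (sub_ne_zero.mpr (hne i j))]
          linear_combination -geom_sum₂_mul (mu j) (lam i) T
  have hsplit : ∑ i, ∑ j, α i * β j * ((lam i ^ T - mu j ^ T) / (lam i - mu j)) =
      -bltCoef d α lam (T + 1) - bltCoef d β mu (T + 1) := by
    have hres_β : ∀ i, ∑ j, β j / (lam i - mu j) = -1 := fun i =>
      eq_neg_of_add_eq_zero_right (hβ i)
    have hres_α : ∀ j, ∑ i, α i / (mu j - lam i) = -1 := fun j =>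
      eq_neg_of_add_eq_zero_right (hα j)
    calc _ = ∑ i, ∑ j, (α i * lam i ^ T * (β j / (lam i - mu j))
          + β j * mu j ^ T * (α i / (mu j - lam i))) :=
          sum_congr rfl fun i _ => sum_congr rfl fun j _ => by
            have hij := sub_ne_zero.mpr (hne i j)
            have hji := sub_ne_zero.mpr (hne i j).symm
            field_simp
            ring
      _ = ∑ i, α i * lam i ^ T * ∑ j, β j / (lam i - mu j)
          + ∑ j, β j * mu j ^ T * ∑ i, α i / (mu j - lam i) := by
          simp only [sum_add_distrib, mul_sum]
          congr 1
          exact sum_comm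
      _ = _ := by simp only [hres_β, hres_α, bltCoef_succ, mul_neg_one, sum_neg_distrib]; ring
  rw [sum_range_succ, sum_range_succ']
  simp only [Nat.add_sub_add_right, Nat.sub_self, Nat.sub_zero, hmid, hsplit, bltCoef_zero,
    if_neg T.succ_ne_zero]
  ring

section Interlacing

variable {d : ℕ} {α lam : Fin d → ℝ}

lemma bltSymbolNum_self_sign (hmono : StrictMono lam) (hα : ∀ i, 0 < α i) (m : Fin d) :
    0 < (-1) ^ (d - 1 - m) * bltSymbolNum α lam (lam m) := by
  have hs := neg_one_pow_card_filter_mul_prod_pos (s := univ.erase m)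
    (f := fun k => lam m - lam k) (m < ·) (fun k _ hk => sub_neg.mpr (hmono hk))
    (fun k hk hk' => sub_pos.mpr (hmono (lt_of_le_of_ne (not_lt.mp hk') (mem_erase.mp hk).1)))
  have hfilter : (univ.erase m).filter (m < ·) = Ioi m := by
    ext k
    simpa using fun h => h.ne'
  rw [hfilter, Fin.card_Ioi] at hs
  rw [bltSymbolNum_apply_self, mul_left_comm]
  exact mul_pos (hα m) hs

lemma bltSymbolNum_zero_sign (hpos : ∀ i, 0 < lam i) (hsum : ∑ i, α i / lam i < 1) :
    0 < (-1) ^ d * bltSymbolNum α lam 0 := by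
  have hsymbol : bltSymbol α lam 0 = 1 - ∑ i, α i / lam i := by
    simp [bltSymbol, div_neg, sub_eq_add_neg]
  rw [← prod_sub_mul_bltSymbol α lam fun i => (hpos i).ne, hsymbol]
  simp only [zero_sub, prod_neg, card_univ, Fintype.card_fin, ← mul_assoc, ← mul_pow]
  rw [neg_one_mul, neg_neg, one_pow, one_mul]
  exact mul_pos (prod_pos fun i _ => hpos i) (by linarith)

lemma exists_interlacing_roots (hmono : StrictMono lam) (hpos : ∀ i, 0 < lam i)
    (hα : ∀ i, 0 < α i) (hsum : ∑ i, α i / lam i < 1) :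
    ∃ mu : Fin d → ℝ, (∀ j, 0 < mu j) ∧ (∀ i j, i < j → lam i < mu j) ∧
      (∀ i j, j ≤ i → mu j < lam i) ∧ ∀ j, bltSymbolNum α lam (mu j) = 0 := by
  have hcont : Continuous (bltSymbolNum α lam) := by unfold bltSymbolNum; fun_prop
  have hroot : ∀ m : Fin d, ∃ x, 0 < x ∧ (∀ i < m, lam i < x) ∧ x < lam m ∧
      bltSymbolNum α lam x = 0 := by
    intro m
    by_cases hm : (m : ℕ) = 0
    · have h0 : 0 < (-1) ^ (d - 1 - m + 1) * bltSymbolNum α lam 0 := by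
        rw [show d - 1 - m + 1 = d by omega]
        exact bltSymbolNum_zero_sign hpos hsum
      obtain ⟨x, hx, hx0⟩ := exists_mem_Ioo_eq_zero_of_neg_one_pow hcont (hpos m).le h0
        (bltSymbolNum_self_sign hmono hα m)
      exact ⟨x, hx.1, fun i hi => absurd hi (by simp [Fin.lt_def, hm]), hx.2, hx0⟩
    · set m' : Fin d := ⟨m - 1, by omega⟩
      have hm' : m' < m := by simp only [Fin.lt_def, m']; omega
      have h' := bltSymbolNum_self_sign hmono hα m'
      rw [show d - 1 - m' = d - 1 - m + 1 by simp only [m']; omega] at h'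
      obtain ⟨x, hx, hx0⟩ := exists_mem_Ioo_eq_zero_of_neg_one_pow hcont (hmono hm').le h'
        (bltSymbolNum_self_sign hmono hα m)
      refine ⟨x, (hpos m').trans hx.1, fun i hi => (hmono.monotone ?_).trans_lt hx.1, hx.2, hx0⟩
      simp only [Fin.le_def, Fin.lt_def, m'] at hi ⊢
      omega
  choose mu hmu_pos hmu_gt hmu_lt hmu_root using hroot
  exact ⟨mu, hmu_pos, fun i j h => hmu_gt j i h,
    fun i j h => (hmu_lt j).trans_le (hmono.monotone h), hmu_root⟩

open Lagrange Polynomial in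
lemma nodalWeight_mul_eval_nodal_neg {mu : Fin d → ℝ} (hlt : ∀ i j, i < j → lam i < mu j)
    (hgt : ∀ i j, j ≤ i → mu j < lam i) (j : Fin d) :
    nodalWeight univ mu j * (nodal univ lam).eval (mu j) < 0 := by
  have hmu : StrictMono mu := fun j k hjk => (hgt j j le_rfl).trans (hlt j k hjk)
  have heval : 0 < (-1) ^ (d - 1 - j + 1) * (nodal univ lam).eval (mu j) := by
    have hs := neg_one_pow_card_filter_mul_prod_pos (s := univ) (f := fun i => mu j - lam i)
      (j ≤ ·) (fun i _ hi => sub_neg.mpr (hgt i j hi))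
      (fun i _ hi => sub_pos.mpr (hlt i j (not_le.mp hi)))
    rwa [filter_le_eq_Ici, Fin.card_Ici, show d - j = d - 1 - j + 1 by omega, ← eval_nodal] at hs
  have hweight : 0 < (-1) ^ (d - 1 - j) * nodalWeight univ mu j := by
    have hs := neg_one_pow_card_filter_mul_prod_pos (s := univ.erase j)
      (f := fun k => (mu j - mu k)⁻¹) (j < ·)
      (fun k _ hk => inv_lt_zero.mpr (sub_neg.mpr (hmu hk)))
      (fun k hk hk' => inv_pos.mpr (sub_pos.mpr
        (hmu (lt_of_le_of_ne (not_lt.mp hk') (mem_erase.mp hk).1))))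
    have hfilter : (univ.erase j).filter (j < ·) = Ioi j := by
      ext k
      simpa using fun h => h.ne'
    rwa [hfilter, Fin.card_Ioi] at hs
  rw [mul_comm]
  exact mul_neg_of_neg_one_pow_succ heval hweight

end Interlacing

section Reindex

variable {d : ℕ} {α lam : Fin d → ℝ}

open Lagrange Polynomial in
theorem exists_bltSymbol_inverse_of_strictMono (hmono : StrictMono lam)
    (hlam : ∀ i, lam i ∈ Set.Ioo (0 : ℝ) 1) (hα : ∀ i, 0 < α i) (hsum : ∑ i, α i / lam i < 1) :
    ∃ β mu : Fin d → ℝ, Function.Injective mu ∧ (∀ j, mu j ∈ Set.Ioo (0 : ℝ) 1) ∧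
      (∀ j, β j < 0) ∧ (∀ i j, lam i ≠ mu j) ∧ (∀ j, bltSymbol α lam (mu j) = 0) ∧
      ∀ i, bltSymbol β mu (lam i) = 0 := by
  obtain ⟨mu, hmu_pos, hlt, hgt, hroot⟩ :=
    exists_interlacing_roots hmono (fun i => (hlam i).1) hα hsum
  have hne : ∀ i j, lam i ≠ mu j := fun i j =>
    (lt_or_ge i j).elim (fun h => (hlt i j h).ne) (fun h => (hgt i j h).ne')
  have hmu : StrictMono mu := fun j k hjk => (hgt j j le_rfl).trans (hlt j k hjk)
  refine ⟨fun j => nodalWeight univ mu j * (nodal univ lam).eval (mu j), mu, hmu.injective,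
    fun j => ⟨hmu_pos j, (hgt j j le_rfl).trans (hlam j).2⟩,
    nodalWeight_mul_eval_nodal_neg hlt hgt, hne, fun j => ?_, fun i => ?_⟩
  · have hprod : ∏ k, (mu j - lam k) ≠ 0 :=
      prod_ne_zero_iff.mpr fun k _ => sub_ne_zero.mpr (hne k j).symm
    have h := prod_sub_mul_bltSymbol α lam fun k => (hne k j).symm
    rw [hroot j] at h
    exact (mul_eq_zero.mp h).resolve_left hprod
  · rw [bltSymbol_nodalWeight hmu.injective (hne i), eval_nodal_at_node (mem_univ i), zero_div]

lemma bltSymbol_comp_equiv {ι K : Type*} [Fintype ι] [Field K] (α lam : ι → K) (σ : ι ≃ ι) :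
    bltSymbol (α ∘ σ) (lam ∘ σ) = bltSymbol α lam := by
  funext x
  exact congrArg (1 + ·) (σ.sum_comp fun i => α i / (x - lam i))

theorem exists_bltSymbol_inverse (hlam : ∀ i, lam i ∈ Set.Ioo (0 : ℝ) 1)
    (hinj : Function.Injective lam) (hα : ∀ i, 0 < α i) (hsum : ∑ i, α i / lam i < 1) :
    ∃ β mu : Fin d → ℝ, Function.Injective mu ∧ (∀ j, mu j ∈ Set.Ioo (0 : ℝ) 1) ∧
      (∀ j, β j < 0) ∧ (∀ i j, lam i ≠ mu j) ∧ (∀ j, bltSymbol α lam (mu j) = 0) ∧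
      ∀ i, bltSymbol β mu (lam i) = 0 := by
  set σ := Tuple.sort lam
  have hmono : StrictMono (lam ∘ σ) :=
    (Tuple.monotone_sort lam).strictMono_of_injective (hinj.comp σ.injective)
  obtain ⟨β, mu, hmu_inj, hmu, hβ, hne, hα_root, hβ_root⟩ :=
    exists_bltSymbol_inverse_of_strictMono (α := α ∘ σ) hmono (fun i => hlam (σ i))
      (fun i => hα (σ i)) ((Equiv.sum_comp σ fun i => α i / lam i).trans_lt hsum)
  rw [bltSymbol_comp_equiv] at hα_root
  refine ⟨β, mu, hmu_inj, hmu, hβ, fun i j => ?_, hα_root, fun i => ?_⟩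
  · simpa using hne (σ.symm i) j
  · simpa using hβ_root (σ.symm i)

end Reindex

theorem blt_inversion_general (d : ℕ) (α lam : Fin d → ℝ)
    (hlam : ∀ i, lam i ∈ Set.Ioo (0 : ℝ) 1)
    (hdist : Function.Injective lam)
    (halpha : ∀ i, 0 < α i)
    (hsum2 : ∑ i, α i / lam i < 1) :
    ∃ (αh lamh : Fin d → ℝ),
      Function.Injective lamh ∧
      (∀ i, lamh i ∈ Set.Ioo (0 : ℝ) 1) ∧
      (∀ i, αh i < 0) ∧
      ∀ n : ℕ, 0 < n →
        (ltToeplitz n (bltCoef d α lam))⁻¹ = ltToeplitz n (bltCoef d αh lamh) := by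
  obtain ⟨β, mu, hmu_inj, hmu, hβ, hne, hα_root, hβ_root⟩ :=
    exists_bltSymbol_inverse hlam hdist halpha hsum2
  refine ⟨β, mu, hmu_inj, hmu, hβ, fun n _ => Matrix.inv_eq_right_inv ?_⟩
  rw [ltToeplitz_mul, ← ltToeplitz_delta]
  exact congrArg _ (funext (sum_bltCoef_mul_bltCoef hne hα_root hβ_root))

/-- BLT inversion theorem: for distinct `λ ∈ (0,1)^d`, `α > 0` with
`∑ αᵢ < 1` and `∑ αᵢ/λᵢ < 1`, there are distinct `λ̂ ∈ (0,1)^d` and `α̂ < 0`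
with `BLT_n(α,λ)⁻¹ = BLT_n(α̂,λ̂)` for all `n`. -/
theorem blt_inversion (d : ℕ) (α lam : Fin d → ℝ)
    (hlam : ∀ i, lam i ∈ Set.Ioo (0 : ℝ) 1)
    (hdist : Function.Injective lam)
    (halpha : ∀ i, 0 < α i)
    (hsum1 : ∑ i, α i < 1)
    (hsum2 : ∑ i, α i / lam i < 1) :
    ∃ (αh lamh : Fin d → ℝ),
      Function.Injective lamh ∧
      (∀ i, lamh i ∈ Set.Ioo (0 : ℝ) 1) ∧
      (∀ i, αh i < 0) ∧
      ∀ n : ℕ, 0 < n →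
        (ltToeplitz n (bltCoef d α lam))⁻¹ = ltToeplitz n (bltCoef d αh lamh) :=
  blt_inversion_general d α lam hlam hdist halpha hsum2
end

section
/- For d = 2, α = (2/5, 1/5), λ = (4/5, 2/5), the inverse of BLT_n(α, λ) equals BLT_n(α̂, λ̂) with α̂ = (−1/15, −8/15) and λ̂ = (3/5, 0), for every positive integer n. -/
open Finset

noncomputable def aSeq : ℕ → ℝ := bltCoef 2 ![2/5, 1/5] ![4/5, 2/5]
noncomputable def bSeq : ℕ → ℝ := bltCoef 2 ![-1/15, -8/15] ![3/5, 0]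

lemma aSeq0 : aSeq 0 = 1 := by simp [aSeq, bltCoef]
lemma aSeqS (t : ℕ) : aSeq (t+1) = (2/5)*(4/5)^t + (1/5)*(2/5)^t := by
  simp [aSeq, bltCoef, Fin.sum_univ_two]
lemma bSeq0 : bSeq 0 = 1 := by simp [bSeq, bltCoef]
lemma bSeq1 : bSeq 1 = -3/5 := by
  simp [bSeq, bltCoef, Fin.sum_univ_two]; norm_num
lemma bSeqS (t : ℕ) : bSeq (t+2) = -(1/15)*(3/5)^(t+1) := by
  simp [bSeq, bltCoef, Fin.sum_univ_two]; ring
lemma bSeq2 : bSeq 2 = -(1/25) := by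
  have := bSeqS 0; norm_num at this; norm_num [this]

lemma bSeq_rec (t : ℕ) : bSeq (t+3) = (3/5) * bSeq (t+2) := by
  rw [show t+3 = (t+1)+2 by ring, bSeqS, bSeqS, pow_succ]; ring

lemma aSeq_rec (t : ℕ) : aSeq (t+3) = (6/5) * aSeq (t+2) - (8/25) * aSeq (t+1) := by
  rw [show t+3 = (t+2)+1 by ring, aSeqS, show t+2 = (t+1)+1 by ring, aSeqS, aSeqS,
    pow_succ, pow_succ, pow_succ, pow_succ]; ring

noncomputable def cSeq (s : ℕ) : ℝ := ∑ t ∈ Finset.range (s+1), aSeq t * bSeq (s - t)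

lemma cSeq1 : cSeq 1 = 0 := by
  simp [cSeq, Finset.sum_range_succ, aSeq0, aSeqS, bSeq0, bSeq1]; norm_num

lemma cSeq2 : cSeq 2 = 0 := by
  simp [cSeq, Finset.sum_range_succ, aSeq0, aSeqS, bSeq0, bSeq1, bSeq2]; norm_num

lemma cSeq_rec (s : ℕ) : cSeq (s+3) = (3/5) * cSeq (s+2) := by
  have key : ∀ t ∈ Finset.range (s+1), aSeq t * bSeq (s+3-t) = (3/5) * (aSeq t * bSeq (s+2-t)) := by
    intro t ht
    rw [Finset.mem_range] at ht
    rw [show s+3-t = (s-t)+3 by omega, show s+2-t = (s-t)+2 by omega, bSeq_rec]; ring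
  have L : cSeq (s+3)
      = (∑ t ∈ Finset.range (s+1), aSeq t * bSeq (s+3-t))
        + aSeq (s+1) * bSeq 2 + aSeq (s+2) * bSeq 1 + aSeq (s+3) * bSeq 0 := by
    unfold cSeq
    rw [show s+3+1 = (s+1)+1+1+1 from by omega, Finset.sum_range_succ,
      Finset.sum_range_succ, Finset.sum_range_succ]
    simp only [show s+1+1+1 = s+3 from by omega, show s+2+1 = s+3 from by omega,
      show s+1+1 = s+2 from by omega,
      show s+3-(s+1) = 2 from by omega, show s+3-(s+2) = 1 from by omega,
      show s+3-(s+3) = 0 from by omega]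
  have R : cSeq (s+2)
      = (∑ t ∈ Finset.range (s+1), aSeq t * bSeq (s+2-t))
        + aSeq (s+1) * bSeq 1 + aSeq (s+2) * bSeq 0 := by
    unfold cSeq
    rw [show s+2+1 = (s+1)+1+1 from by omega, Finset.sum_range_succ, Finset.sum_range_succ]
    simp only [show s+1+1 = s+2 from by omega,
      show s+2-(s+1) = 1 from by omega, show s+2-(s+2) = 0 from by omega]
  rw [L, R, Finset.sum_congr rfl key, ← Finset.mul_sum, aSeq_rec, bSeq0, bSeq1, bSeq2]
  ring

lemma cSeq_zero : ∀ s : ℕ, cSeq (s+1) = 0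
  | 0 => cSeq1
  | 1 => cSeq2
  | (m+2) => by
      rw [show m+2+1 = m+3 from rfl, cSeq_rec, cSeq_zero (m+1)]; ring

lemma conv (s : ℕ) : ∑ t ∈ Finset.range (s+1), aSeq (s - t) * bSeq t = if s = 0 then 1 else 0 := by
  have h := Finset.sum_range_reflect (fun t => aSeq t * bSeq (s - t)) (s+1)
  have h2 : ∀ t ∈ Finset.range (s+1), aSeq (s+1-1-t) * bSeq (s - (s+1-1-t)) = aSeq (s-t) * bSeq t := by
    intro t ht; rw [Finset.mem_range] at ht
    have e1 : s+1-1-t = s-t := by omega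
    have e2 : s - (s-t) = t := by omega
    rw [e1, e2]
  rw [Finset.sum_congr rfl h2] at h
  rw [h]
  cases s with
  | zero => simp [aSeq0, bSeq0]
  | succ m =>
    have hc := cSeq_zero m
    unfold cSeq at hc
    rw [hc]
    simp

lemma blt_mul_eq_one (n : ℕ) :
    ltToeplitz n aSeq * ltToeplitz n bSeq = 1 := by
  ext j k
  rw [Matrix.mul_apply, Matrix.one_apply]
  simp only [ltToeplitz, Matrix.of_apply]
  rw [Fin.sum_univ_eq_sum_range (fun m =>
    (if (m : ℕ) ≤ (j : ℕ) then aSeq ((j:ℕ) - m) else 0) *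
    (if (k : ℕ) ≤ m then bSeq (m - (k:ℕ)) else 0)) n]
  by_cases h : (k : ℕ) ≤ (j : ℕ)
  · have hsub : Finset.Icc (k:ℕ) (j:ℕ) ⊆ Finset.range n := by
      intro m hm
      rw [Finset.mem_Icc] at hm
      rw [Finset.mem_range]
      exact lt_of_le_of_lt hm.2 j.isLt
    rw [← Finset.sum_subset hsub (by
      intro m _ hm
      rw [Finset.mem_Icc] at hm
      push_neg at hm
      by_cases h1 : (k:ℕ) ≤ m
      · have hj := hm h1
        rw [if_neg (by omega)]; ring
      · rw [if_neg h1]; ring)]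
    have hcongr : ∀ m ∈ Finset.Icc (k:ℕ) (j:ℕ),
        (if m ≤ (j:ℕ) then aSeq ((j:ℕ) - m) else 0) *
        (if (k:ℕ) ≤ m then bSeq (m - (k:ℕ)) else 0)
        = aSeq ((j:ℕ) - m) * bSeq (m - (k:ℕ)) := by
      intro m hm
      rw [Finset.mem_Icc] at hm
      rw [if_pos hm.2, if_pos hm.1]
    rw [Finset.sum_congr rfl hcongr,
      show Finset.Icc (k:ℕ) (j:ℕ) = Finset.Ico (k:ℕ) ((j:ℕ)+1) from by rw [Finset.Ico_add_one_right_eq_Icc],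
      Finset.sum_Ico_eq_sum_range]
    have e : (j:ℕ) + 1 - (k:ℕ) = ((j:ℕ) - (k:ℕ)) + 1 := by omega
    rw [e]
    have hcongr2 : ∀ t ∈ Finset.range (((j:ℕ) - (k:ℕ)) + 1),
        aSeq ((j:ℕ) - ((k:ℕ) + t)) * bSeq ((k:ℕ) + t - (k:ℕ))
        = aSeq (((j:ℕ) - (k:ℕ)) - t) * bSeq t := by
      intro t ht; rw [Finset.mem_range] at ht
      congr 2 <;> omega
    rw [Finset.sum_congr rfl hcongr2, conv]
    have : j = k ↔ (j:ℕ) - (k:ℕ) = 0 := by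
      rw [Fin.ext_iff]; omega
    split_ifs with h1 h2 h2 <;> first | rfl | (exfalso; omega)
  · rw [if_neg (by rw [Fin.ext_iff]; omega)]
    apply Finset.sum_eq_zero
    intro m _
    by_cases h1 : (k:ℕ) ≤ (m:ℕ)
    · rw [if_neg (show ¬((m:ℕ) ≤ (j:ℕ)) from by omega)]; ring
    · rw [if_neg h1]; ring

/-- Worked example: for `d = 2`, `α = (2/5, 1/5)`, `λ = (4/5, 2/5)`, the
inverse of `BLT_n(α,λ)` is `BLT_n(α̂,λ̂)` with `α̂ = (−1/15, −8/15)` and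
`λ̂ = (3/5, 0)`, for every `n`. -/
theorem blt_example_inverse :
    ∀ n : ℕ, 0 < n →
      (ltToeplitz n (bltCoef 2 ![2/5, 1/5] ![4/5, 2/5]))⁻¹ =
        ltToeplitz n (bltCoef 2 ![-1/15, -8/15] ![3/5, 0]) := by
  intro n _
  exact Matrix.inv_eq_right_inv (blt_mul_eq_one n)
end
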